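/- arXiv:2008.05069 — 3 statements merged into one kernel-verified Lean document; each statement's English description precedes it below -/
import Mathlib

section
/- For every finite simple graph G there exist positive integers q and h such that every interfered K^1_{q,h} contains G as a vertex-minor. -/
open SimpleGraph

/-! ### Basic operations: local complementation, pivoting, vertex-minors -/

/-- Local complementation at a vertex `v`: the adjacency between each pair of
neighbours of `v` is toggled. -/
def localComp {V : Type*} (G : SimpleGraph V) (v : V) : SimpleGraph V where
  Adj a b := (G.Adj a b ∧ ¬(G.Adj v a ∧ G.Adj v b)) ∨
    (a ≠ b ∧ ¬ G.Adj a b ∧ G.Adj v a ∧ G.Adj v b)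
  symm := by
    constructor
    rintro a b (⟨h1, h2⟩ | ⟨h1, h2, h3, h4⟩)
    · exact Or.inl ⟨h1.symm, fun hc => h2 ⟨hc.2, hc.1⟩⟩
    · exact Or.inr ⟨h1.symm, fun hc => h2 hc.symm, h4, h3⟩
  loopless := by
    constructor
    rintro a (⟨h1, _⟩ | ⟨h1, _⟩)
    · exact G.loopless.irrefl a h1
    · exact h1 rfl

/-- Pivoting an edge `uv`: `G ∧ uv = G * u * v * u`. -/
def pivotG {V : Type*} (G : SimpleGraph V) (u v : V) : SimpleGraph V :=
  localComp (localComp (localComp G u) v) u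

/-- Finite simple graphs, concretely represented on `Fin n`. -/
abbrev FinGraph := Σ n : ℕ, SimpleGraph (Fin n)

/-- One step in the construction of a vertex-minor: pass to an isomorphic copy,
perform a local complementation, or delete a vertex. -/
def VMStep (G H : FinGraph) : Prop :=
  Nonempty (G.2 ≃g H.2) ∨
  (∃ v : Fin G.1, Nonempty ((localComp G.2 v) ≃g H.2)) ∨
  (∃ v : Fin G.1, Nonempty ((G.2.induce {u | u ≠ v}) ≃g H.2))

/-- One step in the construction of a pivot-minor: pass to an isomorphic copy,
pivot an edge, or delete a vertex. -/
def PMStep (G H : FinGraph) : Prop :=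
  Nonempty (G.2 ≃g H.2) ∨
  (∃ u v : Fin G.1, G.2.Adj u v ∧ Nonempty ((pivotG G.2 u v) ≃g H.2)) ∨
  (∃ v : Fin G.1, Nonempty ((G.2.induce {u | u ≠ v}) ≃g H.2))

/-- `H` is a vertex-minor of `G` (both given concretely on `Fin _`). -/
def IsVertexMinorFG (H G : FinGraph) : Prop := Relation.ReflTransGen VMStep G H

/-- `H` is a pivot-minor of `G` (both given concretely on `Fin _`). -/
def IsPivotMinorFG (H G : FinGraph) : Prop := Relation.ReflTransGen PMStep G H

/-- A finite graph represented concretely on `Fin (Nat.card V)`. -/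
noncomputable def toFinGraph {V : Type*} [Finite V] (G : SimpleGraph V) : FinGraph :=
  ⟨Nat.card V, G.comap (Finite.equivFin V).symm⟩

/-- `H` is a vertex-minor of `G`. -/
def HasVertexMinor {V W : Type*} [Finite V] [Finite W]
    (G : SimpleGraph V) (H : SimpleGraph W) : Prop :=
  IsVertexMinorFG (toFinGraph H) (toFinGraph G)

/-- `H` is a pivot-minor of `G`. -/
def HasPivotMinor {V W : Type*} [Finite V] [Finite W]
    (G : SimpleGraph V) (H : SimpleGraph W) : Prop :=
  IsPivotMinorFG (toFinGraph H) (toFinGraph G)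

/-- A class of finite graphs closed under isomorphism, local complementation and
vertex deletion. -/
def VertexMinorClosed (𝒢 : Set FinGraph) : Prop :=
  (∀ G ∈ 𝒢, ∀ H : FinGraph, Nonempty (G.2 ≃g H.2) → H ∈ 𝒢) ∧
  (∀ G ∈ 𝒢, ∀ v : Fin G.1, (⟨G.1, localComp G.2 v⟩ : FinGraph) ∈ 𝒢) ∧
  (∀ G ∈ 𝒢, ∀ v : Fin G.1, toFinGraph (G.2.induce {u | u ≠ v}) ∈ 𝒢)

/-- A class of finite graphs closed under isomorphism, pivoting and
vertex deletion. -/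
def PivotMinorClosed (𝒢 : Set FinGraph) : Prop :=
  (∀ G ∈ 𝒢, ∀ H : FinGraph, Nonempty (G.2 ≃g H.2) → H ∈ 𝒢) ∧
  (∀ G ∈ 𝒢, ∀ u v : Fin G.1, G.2.Adj u v → (⟨G.1, pivotG G.2 u v⟩ : FinGraph) ∈ 𝒢) ∧
  (∀ G ∈ 𝒢, ∀ v : Fin G.1, toFinGraph (G.2.induce {u | u ≠ v}) ∈ 𝒢)

/-! ### Chromatic data -/

/-- The chromatic number, as a natural number (graphs here are finite). -/
noncomputable def chi {V : Type*} (G : SimpleGraph V) : ℕ := G.chromaticNumber.toNat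

/-- The ball of radius `ρ` around `v`: all vertices at distance at most `ρ` from `v`. -/
def ballSet {V : Type*} (G : SimpleGraph V) (v : V) (ρ : ℕ) : Set V :=
  {u | ∃ p : G.Walk v u, p.length ≤ ρ}

/-- `χ^{(ρ)}(G)`: the largest chromatic number of a `ρ`-ball of `G`. -/
noncomputable def chiBall {V : Type*} (G : SimpleGraph V) (ρ : ℕ) : ℕ :=
  ⨆ v : V, chi (G.induce (ballSet G v ρ))

/-- The distance from `u` to `v` is at least `n` (in particular, this holds
vacuously for unreachable pairs). -/
def distGE {V : Type*} (G : SimpleGraph V) (u v : V) (n : ℕ) : Prop :=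
  ∀ p : G.Walk u v, n ≤ p.length

/-- A stable (independent) set of vertices. -/
def IsStableSet {V : Type*} (G : SimpleGraph V) (A : Set V) : Prop :=
  ∀ a ∈ A, ∀ b ∈ A, ¬ G.Adj a b

/-- `A` covers `B`: every vertex of `B` has a neighbour in `A`. -/
def Covers {V : Type*} (G : SimpleGraph V) (A B : Set V) : Prop :=
  ∀ b ∈ B, ∃ a ∈ A, G.Adj a b

/-- `A` and `B` are anti-complete: there are no edges between them. -/
def AntiComplete {V : Type*} (G : SimpleGraph V) (A B : Set V) : Prop :=
  ∀ a ∈ A, ∀ b ∈ B, ¬ G.Adj a b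

/-- An induced path of `G`, given as a walk: it is a path, and the only edges of `G`
between its vertices are the edges of the path. -/
def IsInducedPath {V : Type*} (G : SimpleGraph V) {a b : V} (p : G.Walk a b) : Prop :=
  p.IsPath ∧ ∀ x ∈ p.support, ∀ y ∈ p.support, G.Adj x y → p.toSubgraph.Adj x y
/-! ### Big cliques and bloated trees -/

/-- A big clique: a maximal clique (w.r.t. vertex inclusion) of size at least 3. -/
def IsBigClique {V : Type*} (G : SimpleGraph V) (s : Finset V) : Prop :=
  G.IsClique ↑s ∧ 3 ≤ s.card ∧ ∀ t : Finset V, G.IsClique ↑t → s ⊆ t → t = s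

/-- Two vertices are related when they lie in a common big clique. -/
def bigCliqueRel {V : Type*} (G : SimpleGraph V) (u v : V) : Prop :=
  u = v ∨ ∃ s : Finset V, IsBigClique G s ∧ u ∈ s ∧ v ∈ s

/-- The graph obtained by contracting every big clique to a single vertex. -/
def contractBigCliques {V : Type*} (G : SimpleGraph V) :
    SimpleGraph (Quot (bigCliqueRel G)) where
  Adj a b := a ≠ b ∧ ∃ u v, G.Adj u v ∧ Quot.mk _ u = a ∧ Quot.mk _ v = b
  symm := by
    constructor
    rintro a b ⟨hne, u, v, h, hu, hv⟩
    exact ⟨hne.symm, v, u, h.symm, hv, hu⟩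
  loopless := ⟨fun a h => h.1 rfl⟩

/-- A bloated tree: every edge is in at most one big clique, vertices of a big
`k`-clique have degree at most `k`, and contracting all big cliques yields a tree. -/
def IsBloatedTree {V : Type*} (T : SimpleGraph V) : Prop :=
  (∀ u v, T.Adj u v → ∀ s t : Finset V, IsBigClique T s → IsBigClique T t →
    u ∈ s → v ∈ s → u ∈ t → v ∈ t → s = t) ∧
  (∀ s : Finset V, IsBigClique T s → ∀ v ∈ s, (T.neighborSet v).ncard ≤ s.card) ∧
  (contractBigCliques T).IsTree

/-- A leaf: a vertex of degree at most 1. -/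
def IsLeaf {V : Type*} (G : SimpleGraph V) (v : V) : Prop :=
  (G.neighborSet v).ncard ≤ 1

/-- A branching vertex of a bloated tree: a vertex of degree at least 3 that is
not contained in a triangle. -/
def IsBranching {V : Type*} (G : SimpleGraph V) (v : V) : Prop :=
  3 ≤ (G.neighborSet v).ncard ∧ ¬ ∃ a b, G.Adj v a ∧ G.Adj v b ∧ G.Adj a b

/-! ### Dangling paths and contractions -/

/-- The path `p` dangles from `X`: the set of vertices outside `p` with a
neighbour on `p` is exactly `X`. -/
def DanglesFrom {V : Type*} (G : SimpleGraph V) {a b : V} (p : G.Walk a b)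
    (X : Set V) : Prop :=
  {v | v ∉ p.support ∧ ∃ u ∈ p.support, G.Adj v u} = X

/-- The path `p` dangles oddly from `X`: moreover every vertex of `X` has an odd
number of neighbours on `p`. -/
def DanglesOddly {V : Type*} (G : SimpleGraph V) {a b : V} (p : G.Walk a b)
    (X : Set V) : Prop :=
  DanglesFrom G p X ∧ ∀ x ∈ X, Odd ({u | u ∈ p.support ∧ G.Adj x u}.ncard)

/-- Contract the set `S` to the single vertex `a₀` (for `a₀ ∈ S` with `G[S]`
connected this is contraction of all edges inside `S`). -/
def contractSet {V : Type*} (G : SimpleGraph V) (S : Set V) (a₀ : V) :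
    SimpleGraph {w : V // w ∉ S ∨ w = a₀} where
  Adj u v := u ≠ v ∧
    ((u.1 ∉ S ∧ v.1 ∉ S ∧ G.Adj u.1 v.1) ∨
     (u.1 = a₀ ∧ v.1 ∉ S ∧ ∃ s ∈ S, G.Adj s v.1) ∨
     (v.1 = a₀ ∧ u.1 ∉ S ∧ ∃ s ∈ S, G.Adj u.1 s))
  symm := by
    constructor
    rintro u v ⟨hne, h⟩
    refine ⟨hne.symm, ?_⟩
    rcases h with ⟨h1, h2, h3⟩ | ⟨h1, h2, s, hs, hadj⟩ | ⟨h1, h2, s, hs, hadj⟩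
    · exact Or.inl ⟨h2, h1, h3.symm⟩
    · exact Or.inr (Or.inr ⟨h1, h2, s, hs, hadj.symm⟩)
    · exact Or.inr (Or.inl ⟨h1, h2, s, hs, hadj.symm⟩)
  loopless := ⟨fun u h => h.1 rfl⟩

/-! ### Ramsey numbers -/

/-- Every graph on `Fin N` contains a clique of size `n` or a stable set of size `m`. -/
def RamseyProp (N n m : ℕ) : Prop :=
  ∀ G : SimpleGraph (Fin N),
    (∃ s : Finset (Fin N), G.IsNClique n s) ∨ (∃ s : Finset (Fin N), Gᶜ.IsNClique m s)

/-- The Ramsey number `R(n,m)`: the least `N` such that every graph on at least `N`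
vertices contains a clique of size `n` or a stable set of size `m`. -/
noncomputable def ramsey (n m : ℕ) : ℕ := sInf {N | ∀ M, N ≤ M → RamseyProp M n m}

/-! ### Subdivided complete bipartite graphs and interfered versions -/

/-- The vertex set of (an interfered) `K¹_{n,m}`: the `x_i`, the `y_j`, and the
subdivision vertices `z_{i,j}`. -/
abbrev IVert (n m : ℕ) := Fin n ⊕ Fin m ⊕ Fin n × Fin m

/-- `K¹_{n,m}`: the complete bipartite graph `K_{n,m}` with every edge subdivided
exactly once. -/
def KOneBip (n m : ℕ) : SimpleGraph (IVert n m) :=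
  SimpleGraph.fromRel (fun a b => ∃ i j,
    (a = Sum.inl i ∧ b = Sum.inr (Sum.inr (i, j))) ∨
    (a = Sum.inr (Sum.inl j) ∧ b = Sum.inr (Sum.inr (i, j))))

/-- The pairs that may be adjacent in an interfered `K¹_{n,m}`. -/
def InterferedAllowed (n m : ℕ) (a b : IVert n m) : Prop :=
  (∃ i j, a = Sum.inl i ∧ b = Sum.inr (Sum.inr (i, j))) ∨
  (∃ i j, a = Sum.inr (Sum.inl j) ∧ b = Sum.inr (Sum.inr (i, j))) ∨
  (∃ (k i : Fin n) (j : Fin m), k < i ∧ a = Sum.inl k ∧ b = Sum.inr (Sum.inr (i, j)))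

/-- An interfered `K¹_{n,m}`: all edges `x_i z_{i,j}` and `z_{i,j} y_j` are present,
and all other edges are of the form `x_k z_{i,j}` with `k < i`. -/
def IsInterfered (n m : ℕ) (G : SimpleGraph (IVert n m)) : Prop :=
  (∀ i j, G.Adj (Sum.inl i) (Sum.inr (Sum.inr (i, j)))) ∧
  (∀ i j, G.Adj (Sum.inr (Sum.inl j)) (Sum.inr (Sum.inr (i, j)))) ∧
  (∀ a b, G.Adj a b → InterferedAllowed n m a b ∨ InterferedAllowed n m b a)
/-! ### Long covers -/

/-- A long cover `(L⁰, L¹, L², L³)` of a set `C`. -/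
def IsLongCover {V : Type*} (G : SimpleGraph V) (L : Fin 4 → Set V) (C : Set V) : Prop :=
  (∀ i j : Fin 4, i ≠ j → Disjoint (L i) (L j)) ∧
  (∀ i : Fin 4, Disjoint (L i) C) ∧
  (G.induce (L 0)).Connected ∧
  Covers G (L 0) (L 1) ∧ Covers G (L 1) (L 2) ∧ Covers G (L 2) (L 3) ∧
  Covers G (L 3) C ∧
  AntiComplete G C (L 0) ∧ AntiComplete G C (L 1) ∧ AntiComplete G C (L 2) ∧
  AntiComplete G (L 0) (L 2) ∧ AntiComplete G (L 0) (L 3) ∧ AntiComplete G (L 1) (L 3)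

/-- A long `q`-cover of a set `C`. -/
def IsLongQCover {V : Type*} (G : SimpleGraph V) {q : ℕ}
    (ℒ : Fin q → Fin 4 → Set V) (C : Set V) : Prop :=
  (∀ i, IsLongCover G (ℒ i) C) ∧
  (∀ i j, i ≠ j →
    Disjoint (ℒ i 0 ∪ ℒ i 1 ∪ ℒ i 2 ∪ ℒ i 3) (ℒ j 0 ∪ ℒ j 1 ∪ ℒ j 2 ∪ ℒ j 3)) ∧
  (∀ i j, i < j →
    AntiComplete G (ℒ j 0 ∪ ℒ j 1 ∪ ℒ j 2) (ℒ i 0 ∪ ℒ i 1 ∪ ℒ i 2 ∪ ℒ i 3))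

/-! ### Multicovers -/

/-- A multicover `(N_x : x ∈ X)` of a set `C`, where `X` is presented as an
injective tuple `x : Fin m → V` (whose ordering is the total order on `X`). -/
def IsMulticover {V : Type*} (G : SimpleGraph V) {m : ℕ}
    (x : Fin m → V) (N : Fin m → Set V) (C : Set V) : Prop :=
  Function.Injective x ∧
  (∀ i, N i ⊆ G.neighborSet (x i)) ∧
  (∀ i, x i ∉ C) ∧
  (∀ i j, x i ∉ N j) ∧
  (∀ i, Disjoint (N i) C) ∧
  (∀ i j, i ≠ j → Disjoint (N i) (N j)) ∧
  (∀ i j, ¬ G.Adj (x i) (x j)) ∧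
  (∀ i, ∀ u ∈ C, ¬ G.Adj (x i) u) ∧
  (∀ i, ∀ u ∈ C, ∃ w ∈ N i, G.Adj w u) ∧
  (∀ i j, i < j → ∀ u ∈ N i, ¬ G.Adj (x j) u)

/-- A pure multicover: no `x ∈ X` has a neighbour in `N_y` for `y ≠ x`. -/
def IsPureMC {V : Type*} (G : SimpleGraph V) {m : ℕ}
    (x : Fin m → V) (N : Fin m → Set V) : Prop :=
  ∀ i j, i ≠ j → ∀ u ∈ N i, ¬ G.Adj (x j) u

/-- An impure multicover: for `x ≺ y`, `x` is complete to `N_y`. -/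
def IsImpureMC {V : Type*} (G : SimpleGraph V) {m : ℕ}
    (x : Fin m → V) (N : Fin m → Set V) : Prop :=
  ∀ i j, i < j → ∀ u ∈ N j, G.Adj (x i) u


/-!
By pigeonhole, among `2 ^ q² · n + 1` columns there are `n` columns `c b` that no `x_k` tells
apart: `x_k` is adjacent to all or none of the `z_{i, c b}`. The rows `i = n - 1, …, 0` are then
eliminated from the top. In row `i` the vertex `x_i` has no neighbours left outside its own row, so
pivoting on `x_i z_{i, c i}` strips every other `z_{i, c b}` of its interference, leaving it
adjacent to `z_{i, c i}`, `y_{c i}` and `y_{c b}` only; a local complementation at `z_{i, c b}`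
for each `b < i` adjacent to `i` in `G` then adds the edge `y_{c i} y_{c b}`, and the row is
deleted. At the end the vertices `y_{c b}` induce a copy of `G`.
-/

open Finset

section VertexMinor

variable {U V W : Type*} [Finite U] [Finite V] [Finite W]

theorem HasVertexMinor.refl (G : SimpleGraph V) : HasVertexMinor G G :=
  Relation.ReflTransGen.refl

theorem HasVertexMinor.trans {G : SimpleGraph U} {G' : SimpleGraph V} {G'' : SimpleGraph W}
    (h : HasVertexMinor G G') (h' : HasVertexMinor G' G'') : HasVertexMinor G G'' :=
  Relation.ReflTransGen.trans h h'

noncomputable def isoToFinGraph (G : SimpleGraph V) : (toFinGraph G).2 ≃g G :=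
  ⟨(Finite.equivFin V).symm, Iff.rfl⟩

theorem SimpleGraph.Iso.hasVertexMinor {G : SimpleGraph V} {G' : SimpleGraph W} (e : G ≃g G') :
    HasVertexMinor G G' :=
  .single <| Or.inl ⟨(isoToFinGraph G).trans (e.trans (isoToFinGraph G').symm)⟩

theorem hasVertexMinor_localComp (G : SimpleGraph V) (v : V) :
    HasVertexMinor G (localComp G v) := by
  refine .single <| Or.inr <| Or.inl ⟨Finite.equivFin V v, ⟨⟨Equiv.refl _, fun {a b} => ?_⟩⟩⟩
  simp only [toFinGraph, localComp, comap_adj, Equiv.symm_apply_apply,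
    (Finite.equivFin V).symm.injective.ne_iff]
  rfl

theorem hasVertexMinor_deleteVertex (G : SimpleGraph V) (v : V) :
    HasVertexMinor G (G.induce {u | u ≠ v}) := by
  refine .single <| Or.inr <| Or.inr ⟨Finite.equivFin V v, ⟨RelIso.trans ?_ (isoToFinGraph _).symm⟩⟩
  exact ⟨(Finite.equivFin V).symm.subtypeEquiv (q := (· ∈ {u | u ≠ v}))
    fun _ => (not_congr (Equiv.symm_apply_eq _)).symm, Iff.rfl⟩

end VertexMinor

section LiveSet

variable {V : Type*} [Finite V]

def induceDeleteIso (G : SimpleGraph V) {A : Set V} {v : V} (hv : v ∈ A) :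
    (G.induce A).induce {u | u ≠ ⟨v, hv⟩} ≃g G.induce (A \ {v}) where
  toFun u := ⟨u.1.1, u.1.2, fun h => u.2 (Subtype.ext h)⟩
  invFun u := ⟨⟨u.1, u.2.1⟩, fun h => u.2.2 (congrArg Subtype.val h)⟩
  map_rel_iff' := Iff.rfl

theorem hasVertexMinor_induce_of_subset (G : SimpleGraph V) {A B : Set V} (hBA : B ⊆ A) :
    HasVertexMinor (G.induce A) (G.induce B) := by
  induction h : (A \ B).ncard generalizing A with
  | zero =>
    obtain rfl : A = B := hBA.antisymm' <| Set.sdiff_eq_empty.1 <|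
      (Set.ncard_eq_zero (Set.toFinite _)).1 h
    exact .refl _
  | succ k ih =>
    obtain ⟨v, hvA, hvB⟩ : (A \ B).Nonempty := Set.nonempty_of_ncard_ne_zero (by omega)
    refine (hasVertexMinor_deleteVertex _ ⟨v, hvA⟩).trans <|
      (induceDeleteIso G hvA).hasVertexMinor.trans <| ih (fun b hb => ⟨hBA hb, ?_⟩) ?_
    · rintro rfl
      exact hvB hb
    · rw [Set.sdiff_sdiff_comm,
        Set.ncard_sdiff_singleton_of_mem (show v ∈ A \ B from ⟨hvA, hvB⟩), h]
      rfl

theorem hasVertexMinor_induce (G : SimpleGraph V) (A : Set V) : HasVertexMinor G (G.induce A) :=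
  (induceUnivIso G).symm.hasVertexMinor.trans (hasVertexMinor_induce_of_subset G A.subset_univ)

theorem hasVertexMinor_induce_localComp (G : SimpleGraph V) {A : Set V} {v : V} (hv : v ∈ A) :
    HasVertexMinor (G.induce A) ((localComp G v).induce A) := by
  convert hasVertexMinor_localComp (G.induce A) ⟨v, hv⟩ using 1
  ext a b
  simp [localComp, Subtype.ext_iff]

end LiveSet

section LocalComplementation

variable {V : Type*} (G : SimpleGraph V) {u v a b : V}

theorem localComp_adj_of_ne (hab : a ≠ b) :
    (localComp G v).Adj a b ↔ (G.Adj a b ↔ ¬(G.Adj v a ∧ G.Adj v b)) := by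
  simp only [localComp]
  tauto

theorem localComp_adj_of_not_adj (hva : ¬G.Adj v a) : (localComp G v).Adj a b ↔ G.Adj a b := by
  simp only [localComp]
  tauto

theorem localComp_adj_self : (localComp G v).Adj v b ↔ G.Adj v b := by
  simp only [localComp, G.irrefl, false_and, and_false, or_false, not_false_eq_true, and_true]

theorem pivotG_adj (huv : G.Adj u v) (hau : a ≠ u) (hav : a ≠ v) (hbu : b ≠ u) (hbv : b ≠ v) :
    (pivotG G u v).Adj a b ↔
      (G.Adj a b ↔ ¬((G.Adj u a ∧ G.Adj v b ∧ ¬(G.Adj v a ∧ G.Adj u b)) ∨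
        (G.Adj v a ∧ G.Adj u b ∧ ¬(G.Adj u a ∧ G.Adj v b)))) := by
  obtain rfl | hab := eq_or_ne a b
  · simp only [SimpleGraph.irrefl]
    tauto
  simp only [pivotG, localComp_adj_of_ne _ hab, localComp_adj_of_ne _ hau.symm,
    localComp_adj_of_ne _ hbu.symm, localComp_adj_of_ne _ hav.symm, localComp_adj_of_ne _ hbv.symm,
    localComp_adj_of_ne _ huv.ne.symm, huv, huv.symm, G.irrefl]
  by_cases G.Adj u a <;> by_cases G.Adj u b <;> by_cases G.Adj v a <;> by_cases G.Adj v b <;>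
    simp [*]

theorem pivotG_adj_left (huv : G.Adj u v) (hbu : b ≠ u) (hbv : b ≠ v) :
    (pivotG G u v).Adj u b ↔ G.Adj v b := by
  simp only [pivotG, localComp_adj_self, localComp_adj_of_ne _ hbu.symm,
    localComp_adj_of_ne _ hbv.symm, localComp_adj_of_ne _ huv.ne.symm, huv, huv.symm, G.irrefl]
  tauto

theorem pivotG_adj_right (huv : G.Adj u v) (hbu : b ≠ u) (hbv : b ≠ v) :
    (pivotG G u v).Adj v b ↔ G.Adj u b := by
  simp only [pivotG, localComp_adj_self, localComp_adj_of_ne _ huv.ne,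
    localComp_adj_of_ne _ hbu.symm, localComp_adj_of_ne _ hbv.symm,
    localComp_adj_of_ne _ huv.ne.symm, huv, huv.symm, SimpleGraph.irrefl]
  tauto

end LocalComplementation

open Classical in
/-- As `T` is independent, the local complementations at its vertices do not change each other's
neighbourhoods: each one toggles the pairs of its neighbours. -/
theorem hasVertexMinor_induce_localComp_independent {V : Type*} [Finite V] (G : SimpleGraph V)
    {A B : Set V} (T : Finset V) (hTA : ↑T ⊆ A) (hBT : B ⊆ A \ T)
    (hT : ∀ t ∈ T, ∀ t' ∈ T, ¬G.Adj t t') {G' : SimpleGraph V}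
    (hG' : ∀ a ∈ B, ∀ b ∈ B, a ≠ b →
      (G'.Adj a b ↔ (G.Adj a b ↔ Even #{t ∈ T | G.Adj t a ∧ G.Adj t b}))) :
    HasVertexMinor (G.induce A) (G'.induce B) := by
  induction T using Finset.induction_on generalizing G with
  | empty =>
    have hG'G : G'.induce B = G.induce B := by
      ext a b
      obtain rfl | hab := eq_or_ne a b
      · simp
      · simpa using hG' a a.2 b b.2 (Subtype.coe_injective.ne hab)
    rw [hG'G]
    exact hasVertexMinor_induce_of_subset G (hBT.trans Set.sdiff_subset)
  | insert z T hz ih =>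
    have hzA : z ∈ A := hTA (mem_insert_self z T)
    have hzT : ∀ t ∈ T, ¬G.Adj z t := fun t ht =>
      hT z (mem_insert_self z T) t (mem_insert_of_mem ht)
    refine (hasVertexMinor_induce_localComp G hzA).trans <| ih _
      (fun t ht => hTA (mem_insert_of_mem ht))
      (fun b hb => ⟨(hBT hb).1, fun hbT => (hBT hb).2 (mem_insert_of_mem hbT)⟩)
      (fun t ht t' ht' => by
        rw [localComp_adj_of_not_adj _ (hzT t ht)]
        exact hT t (mem_insert_of_mem ht) t' (mem_insert_of_mem ht'))
      fun a ha b hb hab => ?_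
    have hfilter : ({t ∈ T | (localComp G z).Adj t a ∧ (localComp G z).Adj t b} : Finset V) =
        {t ∈ T | G.Adj t a ∧ G.Adj t b} :=
      filter_congr fun t ht => by simp only [localComp_adj_of_not_adj _ (hzT t ht)]
    rw [hG' a ha b hb hab, localComp_adj_of_ne _ hab, hfilter, filter_insert]
    split_ifs with hzab
    · rw [card_insert_of_notMem fun h => hz (mem_filter.1 h).1, Nat.even_add_one]
      tauto
    · tauto

/-- Within the live set `A`: a subdivided star `K¹_{1,ι}` with centre `x`, subdivision vertices
`z i` and leaves `y i`, in which all `z i` have the same interference `S`. -/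
structure IsUniformStar {V ι : Type*} (Γ : SimpleGraph V) (A : Set V) (x : V) (z y : ι → V)
    (S : Set V) : Prop where
  x_mem : x ∈ A
  z_mem : ∀ i, z i ∈ A
  z_injective : Function.Injective z
  y_injective : Function.Injective y
  adj_x : ∀ w ∈ A, Γ.Adj x w ↔ w ∈ Set.range z
  adj_z : ∀ i, ∀ w ∈ A, Γ.Adj (z i) w ↔ w = x ∨ w = y i ∨ w ∈ S
  subset : S ⊆ A \ insert x (Set.range z)
  y_mem : ∀ i, y i ∈ A \ insert x (Set.range z)
  y_notMem : ∀ i, y i ∉ S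

namespace IsUniformStar

variable {V ι : Type*} {Γ : SimpleGraph V} {A S : Set V} {x : V} {z y : ι → V}

theorem adj_x_z (hΓ : IsUniformStar Γ A x z y S) (i : ι) : Γ.Adj x (z i) :=
  (hΓ.adj_x _ (hΓ.z_mem i)).2 ⟨i, rfl⟩

theorem y_ne_x (hΓ : IsUniformStar Γ A x z y S) (i : ι) : y i ≠ x :=
  fun h => (hΓ.y_mem i).2 (.inl h)

theorem y_ne_z (hΓ : IsUniformStar Γ A x z y S) (i j : ι) : y i ≠ z j :=
  fun h => (hΓ.y_mem i).2 (.inr ⟨j, h.symm⟩)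

theorem not_adj_z_z (hΓ : IsUniformStar Γ A x z y S) (i j : ι) : ¬Γ.Adj (z i) (z j) := by
  rw [hΓ.adj_z i _ (hΓ.z_mem j)]
  rintro (h | h | h)
  · exact (hΓ.adj_x_z j).ne h.symm
  · exact hΓ.y_ne_z i j h.symm
  · exact (hΓ.subset h).2 (.inr ⟨j, rfl⟩)

/-- The pivot cancels the interference `S`, because `z i₀` and `z i` share it. -/
theorem pivotG_adj_z (hΓ : IsUniformStar Γ A x z y S) {i₀ i : ι} (hi : i ≠ i₀) {w : V}
    (hw : w ∈ A) :
    (pivotG Γ x (z i₀)).Adj (z i) w ↔ w = z i₀ ∨ w = y i₀ ∨ w = y i := by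
  have hxz := hΓ.adj_x_z i₀
  have hzi : z i ≠ z i₀ := hΓ.z_injective.ne hi
  have hyy : y i ≠ y i₀ := hΓ.y_injective.ne hi
  by_cases hwx : w = x
  · subst hwx
    rw [adj_comm, pivotG_adj_left _ hxz (hΓ.adj_x_z i).ne.symm hzi]
    simp only [hΓ.not_adj_z_z, (hΓ.adj_x_z i₀).ne, (hΓ.y_ne_x _).symm, false_or]
  by_cases hwz : w = z i₀
  · subst hwz
    rw [adj_comm, pivotG_adj_right _ hxz (hΓ.adj_x_z i).ne.symm hzi]
    simp only [hΓ.adj_x_z, true_or]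
  rw [pivotG_adj _ hxz (hΓ.adj_x_z i).ne.symm hzi hwx hwz, hΓ.adj_z i w hw,
    hΓ.adj_z i₀ w hw]
  simp only [hΓ.adj_x_z, hΓ.not_adj_z_z, hwx, hwz, false_or, true_and, false_and, or_false,
    not_false_eq_true, and_true]
  by_cases hwS : w ∈ S
  · have := hΓ.y_notMem i
    have := hΓ.y_notMem i₀
    grind
  · grind

theorem pivotG_adj_of_mem (hΓ : IsUniformStar Γ A x z y S) (i₀ : ι) {a b : V}
    (ha : a ∈ A \ insert x (Set.range z)) (hb : b ∈ A \ insert x (Set.range z)) :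
    (pivotG Γ x (z i₀)).Adj a b ↔ Γ.Adj a b := by
  have hxa : ¬Γ.Adj x a := fun h => ha.2 (.inr ((hΓ.adj_x a ha.1).1 h))
  have hxb : ¬Γ.Adj x b := fun h => hb.2 (.inr ((hΓ.adj_x b hb.1).1 h))
  have hne : ∀ c ∈ A \ insert x (Set.range z), c ≠ x ∧ c ≠ z i₀ :=
    fun c hc => ⟨fun h => hc.2 (.inl h), fun h => hc.2 (.inr ⟨i₀, h.symm⟩)⟩
  rw [pivotG_adj _ (hΓ.adj_x_z i₀) (hne a ha).1 (hne a ha).2 (hne b hb).1 (hne b hb).2]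
  simp only [hxa, hxb, false_and, and_false, or_self, not_false_eq_true, iff_true]

open Classical in
theorem even_card_common_iff (hΓ : IsUniformStar Γ A x z y S) {i₀ : ι} {T : Finset ι}
    (hne : ∀ i ∈ T, i ≠ i₀) {a b : V} (ha : a ∈ A \ insert x (Set.range z))
    (hb : b ∈ A \ insert x (Set.range z)) (hab : a ≠ b) :
    Even #{t ∈ T.map ⟨z, hΓ.z_injective⟩ | (pivotG Γ x (z i₀)).Adj t a ∧
        (pivotG Γ x (z i₀)).Adj t b} ↔ ¬∃ i ∈ T, s(a, b) = s(y i₀, y i) := by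
  have hcount : #{t ∈ T.map ⟨z, hΓ.z_injective⟩ | (pivotG Γ x (z i₀)).Adj t a ∧
      (pivotG Γ x (z i₀)).Adj t b} = #{i ∈ T | s(a, b) = s(y i₀, y i)} := by
    rw [filter_map, card_map]
    congr 1
    refine filter_congr fun i hi => ?_
    simp only [Function.comp_apply, Function.Embedding.coeFn_mk,
      hΓ.pivotG_adj_z (hne i hi) ha.1, hΓ.pivotG_adj_z (hne i hi) hb.1, Sym2.eq_iff]
    have := fun h => ha.2 (.inr ⟨i₀, h⟩)
    have := fun h => hb.2 (.inr ⟨i₀, h⟩)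
    grind
  have hle : #{i ∈ T | s(a, b) = s(y i₀, y i)} ≤ 1 :=
    card_le_one.2 fun i hi j hj => hΓ.y_injective <|
      Sym2.congr_right.1 ((mem_filter.1 hi).2.symm.trans (mem_filter.1 hj).2)
  rw [hcount]
  rcases Nat.le_one_iff_eq_zero_or_eq_one.1 hle with h | h
  · have hT := filter_eq_empty_iff.1 (card_eq_zero.1 h)
    rw [h]
    simpa using hT
  · obtain ⟨i, hi⟩ := card_pos.1 (h ▸ Nat.one_pos)
    rw [h, iff_false_left Nat.not_even_one, not_not]
    exact ⟨i, mem_filter.1 hi⟩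

variable [Finite V]

/-- Pivot on `x (z i₀)`, complement locally at the `z i` with `i ∈ T`, and delete the star. -/
theorem hasVertexMinor (hΓ : IsUniformStar Γ A x z y S) (i₀ : ι) (T : Finset ι) (hi₀ : i₀ ∉ T)
    {Γ' : SimpleGraph V}
    (hΓ' : ∀ a ∈ A \ insert x (Set.range z), ∀ b ∈ A \ insert x (Set.range z), a ≠ b →
      (Γ'.Adj a b ↔ (Γ.Adj a b ↔ ¬∃ i ∈ T, s(a, b) = s(y i₀, y i)))) :
    HasVertexMinor (Γ.induce A) (Γ'.induce (A \ insert x (Set.range z))) := by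
  classical
  have hpivot : HasVertexMinor (Γ.induce A) ((pivotG Γ x (z i₀)).induce A) :=
    (hasVertexMinor_induce_localComp _ hΓ.x_mem).trans <|
      (hasVertexMinor_induce_localComp _ (hΓ.z_mem i₀)).trans <|
        hasVertexMinor_induce_localComp _ hΓ.x_mem
  have hne : ∀ i ∈ T, i ≠ i₀ := fun i hi h => hi₀ (h ▸ hi)
  refine hpivot.trans <| hasVertexMinor_induce_localComp_independent _ (T.map ⟨z, hΓ.z_injective⟩)
    (by simpa [Set.subset_def] using fun i _ => hΓ.z_mem i) ?_ ?_ fun a ha b hb hab => ?_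
  · intro b hb
    simp only [coe_map, Function.Embedding.coeFn_mk]
    exact ⟨hb.1, fun ⟨i, _, hi⟩ => hb.2 (.inr ⟨i, hi⟩)⟩
  · simp only [mem_map, Function.Embedding.coeFn_mk]
    rintro _ ⟨i, hi, rfl⟩ _ ⟨j, hj, rfl⟩
    rw [hΓ.pivotG_adj_z (hne i hi) (hΓ.z_mem j)]
    rintro (h | h | h)
    · exact hne j hj (hΓ.z_injective h)
    · exact hΓ.y_ne_z _ _ h.symm
    · exact hΓ.y_ne_z _ _ h.symm
  · rw [hΓ' a ha b hb hab, hΓ.pivotG_adj_of_mem i₀ ha hb, hΓ.even_card_common_iff hne ha hb hab]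

end IsUniformStar

namespace IsInterfered

variable {q m : ℕ} {H : SimpleGraph (IVert q m)}

theorem not_adj_inl_inl (hH : IsInterfered q m H) (k k' : Fin q) :
    ¬H.Adj (.inl k) (.inl k') := fun h => by
  simpa [InterferedAllowed] using hH.2.2 _ _ h

theorem not_adj_inl_inr_inl (hH : IsInterfered q m H) (k : Fin q) (j : Fin m) :
    ¬H.Adj (.inl k) (.inr (.inl j)) := fun h => by
  simpa [InterferedAllowed] using hH.2.2 _ _ h

theorem not_adj_inr_inl_inr_inl (hH : IsInterfered q m H) (j j' : Fin m) :
    ¬H.Adj (.inr (.inl j)) (.inr (.inl j')) := fun h => by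
  simpa [InterferedAllowed] using hH.2.2 _ _ h

theorem not_adj_inr_inr_inr_inr (hH : IsInterfered q m H) (p p' : Fin q × Fin m) :
    ¬H.Adj (.inr (.inr p)) (.inr (.inr p')) := fun h => by
  simpa [InterferedAllowed] using hH.2.2 _ _ h

theorem adj_inr_inl_inr_inr_iff (hH : IsInterfered q m H) (j : Fin m) (i : Fin q) (j' : Fin m) :
    H.Adj (.inr (.inl j)) (.inr (.inr (i, j'))) ↔ j = j' := by
  refine ⟨fun h => ?_, fun h => h ▸ hH.2.1 i j⟩
  simpa [InterferedAllowed, eq_comm] using hH.2.2 _ _ h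

theorem le_of_adj_inl_inr_inr (hH : IsInterfered q m H) {k i : Fin q} {j : Fin m}
    (h : H.Adj (.inl k) (.inr (.inr (i, j)))) : k ≤ i := by
  simpa [InterferedAllowed, le_iff_eq_or_lt, eq_comm] using hH.2.2 _ _ h

end IsInterfered

/-- Each `x_k` is adjacent to all or none of the `z_{i, c a}`. -/
def UniformColumns {q h n : ℕ} (H : SimpleGraph (IVert q h)) (c : Fin n ↪ Fin h) : Prop :=
  ∀ i k a b, H.Adj (.inl k) (.inr (.inr (i, c a))) ↔ H.Adj (.inl k) (.inr (.inr (i, c b)))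

section Stages

variable {q h n : ℕ} {H : SimpleGraph (IVert q h)} (G : SimpleGraph (Fin n))
  (r : Fin n ↪o Fin q) (c : Fin n ↪ Fin h)

/-- The vertices left once the rows `r a` with `a ≥ s` are eliminated, restricted to the columns
`c b`. -/
def stageSet (s : ℕ) : Set (IVert q h) := {w | match w with
  | .inl k => ∃ a : Fin n, (a : ℕ) < s ∧ r a = k
  | .inr (.inl j) => j ∈ Set.range c
  | .inr (.inr (i, j)) => (∃ a : Fin n, (a : ℕ) < s ∧ r a = i) ∧ j ∈ Set.range c}

variable (H) in
/-- `H` with the edges `y_{c a} y_{c b}` created by eliminating the rows `r a` with `a ≥ s`: those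
with `ab ∈ E(G)` and `max a b ≥ s`. -/
def stageGraph (s : ℕ) : SimpleGraph (IVert q h) :=
  H ⊔ fromRel fun u v => ∃ a b, G.Adj a b ∧ s ≤ (a : ℕ) ∧
    u = .inr (.inl (c a)) ∧ v = .inr (.inl (c b))

/-- Eliminating row `a` creates exactly the edges `a b` of `G` with `b < a`. -/
theorem adj_and_le_iff_toggle (a a' b' : Fin n) :
    G.Adj a' b' ∧ ((a : ℕ) ≤ a' ∨ (a : ℕ) ≤ b') ↔
      ((G.Adj a' b' ∧ ((a : ℕ) + 1 ≤ a' ∨ (a : ℕ) + 1 ≤ b')) ↔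
        ¬∃ b, (b < a ∧ G.Adj a b) ∧ (a' = a ∧ b' = b ∨ a' = b ∧ b' = a)) := by
  by_cases hG : G.Adj a' b'
  · have hnew : (∃ b, (b < a ∧ G.Adj a b) ∧ (a' = a ∧ b' = b ∨ a' = b ∧ b' = a)) ↔
        (a' = a ∧ b' < a) ∨ (b' = a ∧ a' < a) := by
      constructor
      · rintro ⟨b, ⟨hb, -⟩, ⟨rfl, rfl⟩ | ⟨rfl, rfl⟩⟩
        exacts [.inl ⟨rfl, hb⟩, .inr ⟨rfl, hb⟩]
      · rintro (⟨rfl, hb⟩ | ⟨rfl, hb⟩)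
        exacts [⟨b', ⟨hb, hG⟩, .inl ⟨rfl, rfl⟩⟩, ⟨a', ⟨hb, hG.symm⟩, .inr ⟨rfl, rfl⟩⟩]
    rw [hnew, Fin.lt_def, Fin.lt_def, Fin.ext_iff, Fin.ext_iff]
    simp only [hG, true_and]
    have := Fin.val_ne_of_ne hG.ne
    omega
  · simp only [hG, false_and, false_iff, not_not, not_exists, not_and]
    rintro b ⟨-, hab⟩ (⟨rfl, rfl⟩ | ⟨rfl, rfl⟩)
    exacts [hG hab, hG hab.symm]

variable {G c}

theorem stageGraph_adj_inl {s : ℕ} {k : Fin q} {w : IVert q h} :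
    (stageGraph H G c s).Adj (.inl k) w ↔ H.Adj (.inl k) w := by
  simp [stageGraph]

theorem stageGraph_adj_inr_inr {s : ℕ} {p : Fin q × Fin h} {w : IVert q h} :
    (stageGraph H G c s).Adj (.inr (.inr p)) w ↔ H.Adj (.inr (.inr p)) w := by
  simp [stageGraph]

theorem stageGraph_adj_inr_inl (hH : IsInterfered q h H) {s : ℕ} {a b : Fin n} :
    (stageGraph H G c s).Adj (.inr (.inl (c a))) (.inr (.inl (c b))) ↔
      G.Adj a b ∧ (s ≤ (a : ℕ) ∨ s ≤ (b : ℕ)) := by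
  simp only [stageGraph, sup_adj, fromRel_adj, hH.not_adj_inr_inl_inr_inl, false_or, ne_eq,
    Sum.inr.injEq, Sum.inl.injEq, EmbeddingLike.apply_eq_iff_eq]
  constructor
  · rintro ⟨-, ⟨a, b, hab, hs, rfl, rfl⟩ | ⟨a, b, hab, hs, rfl, rfl⟩⟩
    · exact ⟨hab, .inl hs⟩
    · exact ⟨hab.symm, .inr hs⟩
  · rintro ⟨hab, hs | hs⟩
    · exact ⟨hab.ne, .inl ⟨a, b, hab, hs, rfl, rfl⟩⟩
    · exact ⟨hab.ne, .inr ⟨b, a, hab.symm, hs, rfl, rfl⟩⟩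

theorem stageSet_succ_sdiff (a : Fin n) :
    stageSet r c (a + 1) \ insert (.inl (r a)) (Set.range fun b => .inr (.inr (r a, c b))) =
      stageSet r c a := by
  have hrow : ∀ k, (∃ a' ≤ a, r a' = k) ∧ ¬k = r a ↔ ∃ a' < a, r a' = k := by
    refine fun k => ⟨?_, ?_⟩
    · rintro ⟨⟨a', ha', rfl⟩, hne⟩
      exact ⟨a', lt_of_le_of_ne ha' (fun h => hne (h ▸ rfl)), rfl⟩
    · rintro ⟨a', ha', rfl⟩
      exact ⟨⟨a', ha'.le, rfl⟩, r.injective.ne ha'.ne⟩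
  ext (k | j | ⟨i, j⟩) <;> simp [stageSet]
  · exact hrow k
  · rw [← hrow i]
    constructor
    · rintro ⟨⟨hi, b, rfl⟩, hb⟩
      exact ⟨⟨hi, fun e => hb e.symm b rfl⟩, b, rfl⟩
    · rintro ⟨⟨hi, hne⟩, hj⟩
      exact ⟨⟨hi, hj⟩, fun e => absurd e.symm hne⟩

theorem isUniformStar_stage (hH : IsInterfered q h H)
    (huni : UniformColumns H c) (a : Fin n) :
    IsUniformStar (stageGraph H G c (a + 1)) (stageSet r c (a + 1)) (.inl (r a))
      (fun b => .inr (.inr (r a, c b))) (fun b => .inr (.inl (c b)))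
      {w ∈ stageSet r c a | w.isLeft ∧ H.Adj w (.inr (.inr (r a, c a)))} where
  x_mem := by simp [stageSet]
  z_mem b := by simp [stageSet]
  z_injective b b' e := c.injective (by simpa using e)
  y_injective b b' e := c.injective (by simpa using e)
  adj_x := by
    rintro (k | j | ⟨i, j⟩) hw <;> simp only [stageGraph_adj_inl]
    · simp [hH.not_adj_inl_inl]
    · simp [hH.not_adj_inl_inr_inl]
    · obtain ⟨⟨a', ha', rfl⟩, b, rfl⟩ : (∃ a' ≤ a, r a' = i) ∧ ∃ b, c b = j := by
        simpa [stageSet] using hw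
      simp only [Set.mem_range, Sum.inr.injEq, Prod.mk.injEq, EmbeddingLike.apply_eq_iff_eq,
        exists_eq_right]
      refine ⟨fun hadj => ?_, fun e => e ▸ hH.1 _ _⟩
      exact le_antisymm (r.le_iff_le.1 (hH.le_of_adj_inl_inr_inr hadj)) ha'
  adj_z b := by
    rintro (k | j | ⟨i, j⟩) hw <;> simp only [stageGraph_adj_inr_inr]
    · obtain ⟨a', ha', rfl⟩ : ∃ a' ≤ a, r a' = k := by simpa [stageSet] using hw
      rw [adj_comm]
      rcases ha'.lt_or_eq with hlt | rfl
      · have hmem : (.inl (r a') : IVert q h) ∈ stageSet r c a := ⟨a', hlt, rfl⟩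
        simp [hmem, hlt.ne, huni (r a) (r a') b a]
      · simp [hH.1]
    · rw [adj_comm, hH.adj_inr_inl_inr_inr_iff]
      simp
    · simp [hH.not_adj_inr_inr_inr_inr]
  subset := by
    rw [stageSet_succ_sdiff]
    exact fun w hw => hw.1
  y_mem b := by
    rw [stageSet_succ_sdiff]
    simp [stageSet]
  y_notMem b := by simp

theorem hasVertexMinor_stage_succ (hH : IsInterfered q h H)
    (huni : UniformColumns H c) (a : Fin n) :
    HasVertexMinor ((stageGraph H G c (a + 1)).induce (stageSet r c (a + 1)))
      ((stageGraph H G c a).induce (stageSet r c a)) := by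
  classical
  rw [← stageSet_succ_sdiff r (c := c) a]
  refine (isUniformStar_stage r hH huni a).hasVertexMinor a {b | b < a ∧ G.Adj a b} (by simp) ?_
  rw [stageSet_succ_sdiff]
  have hY : ∀ u ∈ stageSet r c a, (∃ b, u = .inr (.inl (c b))) ∨ (∀ b, u ≠ .inr (.inl (c b))) ∧
      ∀ v, (stageGraph H G c a).Adj u v ↔ (stageGraph H G c (a + 1)).Adj u v := by
    rintro (k | j | p) hu
    · simp [stageGraph_adj_inl]
    · obtain ⟨b, rfl⟩ : j ∈ Set.range c := hu
      exact .inl ⟨b, rfl⟩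
    · simp [stageGraph_adj_inr_inr]
  intro u hu v hv huv
  rcases hY u hu with ⟨a', rfl⟩ | ⟨hu, hu'⟩
  · rcases hY v hv with ⟨b', rfl⟩ | ⟨hv, hv'⟩
    · simpa [stageGraph_adj_inr_inl hH] using adj_and_le_iff_toggle G a a' b'
    · rw [adj_comm, hv', adj_comm]
      simp [hv]
  · rw [hu']
    simp [hu]

theorem hasVertexMinor_stage_zero (hH : IsInterfered q h H)
    (huni : UniformColumns H c) {s : ℕ} (hs : s ≤ n) :
    HasVertexMinor ((stageGraph H G c s).induce (stageSet r c s))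
      ((stageGraph H G c 0).induce (stageSet r c 0)) := by
  induction s with
  | zero => exact .refl _
  | succ s ih => exact (hasVertexMinor_stage_succ r hH huni ⟨s, hs⟩).trans (ih (by omega))

theorem stageGraph_card : stageGraph H G c n = H := by
  ext u v
  simp [stageGraph]

theorem hasVertexMinor_stageGraph_zero (hH : IsInterfered q h H) :
    HasVertexMinor ((stageGraph H G c 0).induce (stageSet r c 0)) G := by
  let f : G ↪g stageGraph H G c 0 :=
    ⟨c.trans (Function.Embedding.inl.trans Function.Embedding.inr), by
      simp [stageGraph_adj_inr_inl hH]⟩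
  have hf : stageSet r c 0 = Set.range f := by
    ext (k | j | p)
    all_goals simp [stageSet, f]
  rw [hf]
  exact f.isoInduceRange.symm.hasVertexMinor

end Stages

theorem IsInterfered.hasVertexMinor_of_uniform {q h n : ℕ} {H : SimpleGraph (IVert q h)}
    (hH : IsInterfered q h H) (r : Fin n ↪o Fin q) (c : Fin n ↪ Fin h)
    (huni : UniformColumns H c) (G : SimpleGraph (Fin n)) : HasVertexMinor H G := by
  have hdescent := hasVertexMinor_stage_zero (G := G) r hH huni le_rfl
  rw [stageGraph_card] at hdescent
  exact (hasVertexMinor_induce H _).trans <| hdescent.trans <| hasVertexMinor_stageGraph_zero r hH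

theorem Fintype.exists_embedding_fin_forall_eq {α β : Type*} [Fintype α] [Fintype β] (f : α → β)
    {n : ℕ} (hn : Fintype.card β * n < Fintype.card α) :
    ∃ c : Fin n ↪ α, ∃ y, ∀ i, f (c i) = y := by
  classical
  obtain ⟨y, hy⟩ := Fintype.exists_lt_card_fiber_of_mul_lt_card f hn
  obtain ⟨s, hs, hcard⟩ := Finset.exists_subset_card_eq hy.le
  exact ⟨(Finset.equivFinOfCardEq hcard).symm.toEmbedding.trans (Function.Embedding.subtype _), y,
    fun i => (mem_filter.1 (hs (Subtype.prop _))).2⟩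

/-- **Lemma 2.3.** For every graph `G` there exist `q` and `h` such that every
interfered `K¹_{q,h}` contains `G` as a vertex-minor. -/
theorem interfered_contains_all_as_vertexMinor (W : Type) [Fintype W]
    (G : SimpleGraph W) :
    ∃ q h : ℕ, 0 < q ∧ 0 < h ∧
      ∀ H : SimpleGraph (IVert q h), IsInterfered q h H → HasVertexMinor H G := by
  set n := Fintype.card W
  -- one spare row keeps `q` positive when `W` is empty
  refine ⟨n + 1, 2 ^ ((n + 1) * (n + 1)) * n + 1, n.succ_pos, Nat.succ_pos _, fun H hH => ?_⟩
  obtain ⟨c, _, hc⟩ := Fintype.exists_embedding_fin_forall_eq (n := n)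
    (fun j (p : Fin (n + 1) × Fin (n + 1)) => H.Adj (.inl p.2) (.inr (.inr (p.1, j))))
    (by simp [Fintype.card_prop])
  have huni : UniformColumns H c := fun i k a b =>
    Iff.of_eq (congrFun ((hc a).trans (hc b).symm) (i, k))
  exact (hH.hasVertexMinor_of_uniform Fin.castSuccOrderEmb c huni _).trans
    (Iso.comap (Fintype.equivFin W).symm G).hasVertexMinor
end

section
/- Let G be a connected graph and let T be a maximal induced bloated tree of G (maximal with respect to vertex inclusion among induced subgraphs of G that are bloated trees). If u and v are adjacent vertices that both have degree two in T, and both u and v are cut vertices of G, then the edge uv is a bridge of G. -/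
open SimpleGraph

/-!
Suppose `uv` is not a bridge, and let `u'`, `v'` be the other neighbours of `u`, `v` in `T`.
Since `u` is a cut vertex and `T` is maximal, `u'` is separated from `v` in `G - u`: otherwise
every vertex of `T - u` reaches `v` in `G - u`, so a component of `G - u` missing `v` misses `T`,
and a neighbour of `u` in it could be hung on `T` as a pendant vertex. Symmetrically, `v'` is
separated from `u` in `G - v`. A walk from `v` to `u` in `G - uv` enters `u` from some `z ≠ v`
that reaches `v` in `G - u`. This `z` is not in `T`, and its neighbours in `T` lie in `{u, v}`:
a path inside `T` from any other neighbour to `{u, v}` arrives through `u'` or `v'`, joining it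
to the wrong side. So `T + z` is a bloated tree (`z` is a pendant vertex at `u`, or `uvz` is a
new big triangle, as `u` and `v` lie in no big clique), contradicting maximality.

That `T + z` is a bloated tree is checked on the contraction: deleting the node containing `z`
leaves a graph embedding into the old contraction, and the neighbours of that node hang off the
node `u`, or off the edge `uv`, of the old tree, so no cycle passes through it.
-/

namespace SimpleGraph

variable {V : Type*} {G : SimpleGraph V}

def ReachableIn (G : SimpleGraph V) (S : Set V) (a b : V) : Prop :=
  ∃ p : G.Walk a b, ∀ x ∈ p.support, x ∈ S

namespace ReachableIn

variable {S S' A : Set V} {a b c : V}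

lemma refl (ha : a ∈ S) : G.ReachableIn S a a := ⟨.nil, by simpa⟩

lemma symm (h : G.ReachableIn S a b) : G.ReachableIn S b a := by
  obtain ⟨p, hp⟩ := h
  exact ⟨p.reverse, by simpa using hp⟩

lemma trans (h : G.ReachableIn S a b) (h' : G.ReachableIn S b c) : G.ReachableIn S a c := by
  obtain ⟨p, hp⟩ := h
  obtain ⟨q, hq⟩ := h'
  refine ⟨p.append q, fun x hx => ?_⟩
  rcases (Walk.mem_support_append_iff p q).mp hx with hx | hx
  exacts [hp x hx, hq x hx]

lemma of_adj (h : G.Adj a b) (ha : a ∈ S) (hb : b ∈ S) : G.ReachableIn S a b :=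
  ⟨h.toWalk, by simp [ha, hb]⟩

lemma mono (h : G.ReachableIn S a b) (hS : S ⊆ S') : G.ReachableIn S' a b := by
  obtain ⟨p, hp⟩ := h
  exact ⟨p, fun x hx => hS (hp x hx)⟩

lemma mono_graph {G' : SimpleGraph V} (h : G.ReachableIn S a b) (hG : G ≤ G') :
    G'.ReachableIn S a b := by
  obtain ⟨p, hp⟩ := h
  exact ⟨p.mapLe hG, by simpa using hp⟩

lemma left_mem (h : G.ReachableIn S a b) : a ∈ S := by
  obtain ⟨p, hp⟩ := h
  exact hp a p.start_mem_support

lemma right_mem (h : G.ReachableIn S a b) : b ∈ S := h.symm.left_mem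

lemma exists_adj_mem (h : G.ReachableIn S a b) (ha : a ∉ A) (hb : b ∈ A) :
    ∃ n c, G.ReachableIn (S \ A) a n ∧ G.Adj n c ∧ c ∈ A := by
  obtain ⟨p, hp⟩ := h
  induction p with
  | nil => exact absurd hb ha
  | @cons a a₁ b hadj p ih =>
    have haS : a ∈ S := hp a (by simp)
    by_cases ha₁ : a₁ ∈ A
    · exact ⟨a, a₁, refl (S := S \ A) ⟨haS, ha⟩, hadj, ha₁⟩
    · obtain ⟨n, c, hn, hnc, hc⟩ := ih ha₁ hb (fun x hx => hp x (by simp [hx]))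
      exact ⟨n, c, (of_adj (S := S \ A) hadj ⟨haS, ha⟩ ⟨hp a₁ (by simp), ha₁⟩).trans hn, hnc, hc⟩

end ReachableIn

lemma reachableIn_univ_iff {a b : V} : G.ReachableIn Set.univ a b ↔ G.Reachable a b :=
  ⟨fun ⟨p, _⟩ => ⟨p⟩, fun ⟨p⟩ => ⟨p, fun _ _ => Set.mem_univ _⟩⟩

lemma reachable_induce_iff {S : Set V} {a b : V} (ha : a ∈ S) (hb : b ∈ S) :
    (G.induce S).Reachable ⟨a, ha⟩ ⟨b, hb⟩ ↔ G.ReachableIn S a b := by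
  constructor
  · rintro ⟨p⟩
    have hp : ∀ x ∈ (p.map (Embedding.induce S).toHom).support, x ∈ S := by
      intro x hx
      rw [Walk.support_map, List.mem_map] at hx
      obtain ⟨y, -, rfl⟩ := hx
      exact y.2
    exact ⟨_, hp⟩
  · rintro ⟨p, hp⟩
    exact ⟨p.induce S hp⟩

lemma connected_induce_iff_reachableIn {S : Set V} :
    (G.induce S).Connected ↔ S.Nonempty ∧ ∀ a ∈ S, ∀ b ∈ S, G.ReachableIn S a b := by
  rw [connected_iff, Set.nonempty_coe_sort, and_comm]
  refine and_congr_right fun _ => ⟨fun h a ha b hb => ?_, fun h a b => ?_⟩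
  · exact (reachable_induce_iff ha hb).mp (h _ _)
  · exact (reachable_induce_iff a.2 b.2).mpr (h _ a.2 _ b.2)

lemma isAcyclic_of_isAcyclic_induce_compl_singleton {X : SimpleGraph V} {K : V}
    (hK : (X.induce {K}ᶜ).IsAcyclic)
    (hnbr : ∀ a b, X.Adj K a → X.Adj K b → X.ReachableIn {K}ᶜ a b → a = b) :
    X.IsAcyclic := by
  classical
  intro z c hc
  by_cases hKc : K ∈ c.support
  · have hd := hc.rotate hKc
    generalize c.rotate K hKc = d at hd
    cases d with
    | nil => exact hd.not_nil Walk.Nil.nil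
    | cons h p =>
      have hp : ¬ p.Nil := Walk.not_nil_of_ne h.ne'
      have hne := hd.snd_ne_penultimate
      rw [Walk.snd_cons, Walk.penultimate_cons_of_not_nil _ _ hp] at hne
      refine hne (hnbr _ _ h (p.adj_penultimate hp).symm ⟨p.dropLast, fun x hx hxK => ?_⟩)
      have hnodup := ((Walk.cons_isCycle_iff p h).mp hd).1.support_nodup
      rw [← Walk.support_dropLast_concat hp, List.nodup_append] at hnodup
      exact hnodup.2.2 x hx K (List.mem_singleton_self K) hxK
  · apply hK (c.induce {K}ᶜ fun x hx hxK => hKc (hxK ▸ hx))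
    rw [← Walk.isCycle_map_iff_of_injective (f := (Embedding.induce {K}ᶜ).toHom)
      Subtype.val_injective, Walk.map_induce]
    exact hc

lemma IsAcyclic.apply_eq_of_reachable {W : Type*} {Y : SimpleGraph V} {Z : SimpleGraph W}
    (hY : Y.IsAcyclic) (f : Z →g Y) {B : Set V} (hB : Y.IsClique B) (hf : ∀ z, f z ∉ B)
    {a b : W} (hab : Z.Reachable a b) (ha : ∃ x ∈ B, Y.Adj x (f a))
    (hb : ∃ y ∈ B, Y.Adj y (f b)) : f a = f b := by
  obtain ⟨x, hxB, hxa⟩ := ha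
  obtain ⟨y, hyB, hyb⟩ := hb
  by_contra hne
  -- `s(x, f a)` is a bridge of `Y`, yet `f a` reaches `x` around it through `f b`.
  have hbridge := isAcyclic_iff_forall_adj_isBridge.mp hY hxa
  rw [isBridge_iff] at hbridge
  have hfx (z) : f z ≠ x := fun h => hf z (h ▸ hxB)
  let g : Z →g Y.deleteEdges {s(x, f a)} :=
    ⟨f, fun {c d} h => ⟨f.map_adj h, by simp [hfx c, hfx d]⟩⟩
  have hyb' : (Y.deleteEdges {s(x, f a)}).Adj y (f b) := ⟨hyb, by simp [hfx b, Ne.symm hne]⟩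
  have hxb : (Y.deleteEdges {s(x, f a)}).Reachable x (f b) := by
    by_cases hxy : x = y
    · subst hxy
      exact hyb'.reachable
    · have hya : y ≠ f a := fun h => hf a (h ▸ hyB)
      have hxy' : (Y.deleteEdges {s(x, f a)}).Adj x y :=
        ⟨hB hxB hyB hxy, by simp [Ne.symm hxy, hya]⟩
      exact hxy'.reachable.trans hyb'.reachable
  exact hbridge (hxb.trans (hab.map g).symm)

end SimpleGraph

section Contraction

variable {V : Type*} {X : SimpleGraph V}

lemma reachable_mk_of_reachable {x y : V} (h : X.Reachable x y) :
    (contractBigCliques X).Reachable (Quot.mk _ x) (Quot.mk _ y) := by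
  rw [reachable_iff_reflTransGen] at h ⊢
  refine h.lift' _ fun a b hab => ?_
  change Relation.ReflTransGen _ (Quot.mk _ a) (Quot.mk _ b)
  by_cases hq : Quot.mk (bigCliqueRel X) a = Quot.mk _ b
  · rw [hq]
  · exact .single ⟨hq, a, b, hab, rfl, rfl⟩

lemma reachable_of_reachable_mk {x y : V}
    (h : (contractBigCliques X).Reachable (Quot.mk _ x) (Quot.mk _ y)) : X.Reachable x y := by
  let φ : Quot (bigCliqueRel X) → X.ConnectedComponent :=
    Quot.lift X.connectedComponentMk fun a b hab => ConnectedComponent.eq.mpr <| by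
      rcases hab with rfl | ⟨s, hs, ha, hb⟩
      · rfl
      · by_cases hab : a = b
        · rw [hab]
        · exact (hs.1 ha hb hab).reachable
  suffices ∀ p q, (contractBigCliques X).Reachable p q → φ p = φ q from
    ConnectedComponent.eq.mp (this _ _ h)
  intro p q h
  rw [reachable_iff_reflTransGen] at h
  induction h with
  | refl => rfl
  | tail _ hadj ih =>
    obtain ⟨-, x, y, hxy, rfl, rfl⟩ := hadj
    exact ih.trans (ConnectedComponent.eq.mpr hxy.reachable)

lemma connected_contractBigCliques_iff :
    (contractBigCliques X).Connected ↔ X.Connected := by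
  rw [connected_iff, connected_iff]
  constructor
  · rintro ⟨h, ⟨q⟩⟩
    obtain ⟨x, -⟩ := q.exists_rep
    exact ⟨fun x y => reachable_of_reachable_mk (h _ _), ⟨x⟩⟩
  · rintro ⟨h, ⟨x⟩⟩
    refine ⟨fun p q => ?_, ⟨Quot.mk _ x⟩⟩
    obtain ⟨x, rfl⟩ := p.exists_rep
    obtain ⟨y, rfl⟩ := q.exists_rep
    exact reachable_mk_of_reachable (h x y)

end Contraction

section BigCliqueOn

variable {V : Type*} {G : SimpleGraph V} {S : Set V}

def IsBigCliqueOn (G : SimpleGraph V) (S : Set V) (s : Finset V) : Prop :=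
  ↑s ⊆ S ∧ G.IsClique ↑s ∧ 3 ≤ s.card ∧
    ∀ t : Finset V, ↑t ⊆ S → G.IsClique ↑t → s ⊆ t → t = s

lemma isClique_induce_map_iff (s : Finset S) :
    (G.induce S).IsClique (s : Set S) ↔
      G.IsClique (s.map (Function.Embedding.subtype (· ∈ S)) : Set V) := by
  rw [isClique_induce_iff, Finset.coe_map, Function.Embedding.coe_subtype]

lemma isBigClique_induce_iff (s : Finset S) :
    IsBigClique (G.induce S) s ↔
      IsBigCliqueOn G S (s.map (Function.Embedding.subtype (· ∈ S))) := by
  classical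
  unfold IsBigClique IsBigCliqueOn
  rw [isClique_induce_map_iff, Finset.card_map]
  constructor
  · rintro ⟨hc, h3, hmax⟩
    refine ⟨Finset.map_subtype_subset s, hc, h3, fun t htS htc hst => ?_⟩
    rw [← Finset.subtype_map_of_mem (p := (· ∈ S)) htS] at htc hst ⊢
    rw [hmax _ ((isClique_induce_map_iff _).mpr htc) (Finset.map_subset_map.mp hst)]
  · rintro ⟨-, hc, h3, hmax⟩
    refine ⟨hc, h3, fun t htc hst =>
      Finset.map_injective (Function.Embedding.subtype (· ∈ S)) ?_⟩
    exact hmax _ (Finset.map_subtype_subset t) ((isClique_induce_map_iff t).mp htc)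
      (Finset.map_subset_map.mpr hst)

lemma exists_isBigClique_induce {s : Finset V} (hs : IsBigCliqueOn G S s) :
    ∃ s' : Finset S, IsBigClique (G.induce S) s' ∧
      s'.map (Function.Embedding.subtype (· ∈ S)) = s := by
  classical
  refine ⟨s.subtype (· ∈ S), ?_, Finset.subtype_map_of_mem hs.1⟩
  rwa [isBigClique_induce_iff, Finset.subtype_map_of_mem hs.1]

lemma bigCliqueRel_induce_iff (a b : S) :
    bigCliqueRel (G.induce S) a b ↔ a = b ∨ ∃ s, IsBigCliqueOn G S s ∧ a.1 ∈ s ∧ b.1 ∈ s := by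
  refine or_congr Iff.rfl ⟨?_, ?_⟩
  · rintro ⟨s, hs, ha, hb⟩
    exact ⟨_, (isBigClique_induce_iff s).mp hs, Finset.mem_map_of_mem _ ha,
      Finset.mem_map_of_mem _ hb⟩
  · rintro ⟨s, hs, ha, hb⟩
    obtain ⟨s', hs', rfl⟩ := exists_isBigClique_induce hs
    exact ⟨s', hs', by simpa using ha, by simpa using hb⟩

lemma ncard_neighborSet_induce (x : S) :
    ((G.induce S).neighborSet x).ncard = {y ∈ S | G.Adj x y}.ncard := by
  rw [← Set.ncard_image_of_injective _ Subtype.val_injective]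
  congr 1
  ext y
  simp [neighborSet, and_comm]

lemma isBloatedTree_induce_iff : IsBloatedTree (G.induce S) ↔
    (∀ a b, G.Adj a b → ∀ s t, IsBigCliqueOn G S s → IsBigCliqueOn G S t →
      a ∈ s → b ∈ s → a ∈ t → b ∈ t → s = t) ∧
    (∀ s, IsBigCliqueOn G S s → ∀ x ∈ s, {y ∈ S | G.Adj x y}.ncard ≤ s.card) ∧
    (contractBigCliques (G.induce S)).IsTree := by
  let e := Function.Embedding.subtype (· ∈ S)
  refine and_congr ⟨fun h a b hab s t hs ht has hbs hat hbt => ?_,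
    fun h a b hab s t hs ht has hbs hat hbt => ?_⟩
    (and_congr ⟨fun h s hs x hx => ?_, fun h s hs x hx => ?_⟩ Iff.rfl)
  · obtain ⟨s, hs', rfl⟩ := exists_isBigClique_induce hs
    obtain ⟨t, ht', rfl⟩ := exists_isBigClique_induce ht
    obtain ⟨a, ha, rfl⟩ := Finset.mem_map.mp has
    obtain ⟨b, hb, rfl⟩ := Finset.mem_map.mp hbs
    rw [h a b hab s t hs' ht' ha hb (by simpa using hat) (by simpa using hbt)]
  · refine Finset.map_injective e (h a b hab _ _ ((isBigClique_induce_iff s).mp hs)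
      ((isBigClique_induce_iff t).mp ht) ?_ ?_ ?_ ?_) <;>
      exact Finset.mem_map_of_mem e ‹_›
  · obtain ⟨s, hs', rfl⟩ := exists_isBigClique_induce hs
    obtain ⟨x, hxs, rfl⟩ := Finset.mem_map.mp hx
    simpa [ncard_neighborSet_induce] using h s hs' x hxs
  · rw [ncard_neighborSet_induce]
    simpa using h _ ((isBigClique_induce_iff s).mp hs) x.1 (Finset.mem_map_of_mem e hx)

end BigCliqueOn

section InsertVertex

variable {V : Type*} {G : SimpleGraph V} {S : Set V} {s : Finset V} {u v w x : V}

lemma IsBigCliqueOn.of_insert (h : IsBigCliqueOn G (insert w S) s) (hws : w ∉ s) :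
    IsBigCliqueOn G S s := by
  obtain ⟨hsub, hc, h3, hmax⟩ := h
  exact ⟨fun x hx => (hsub hx).resolve_left (by rintro rfl; exact hws hx), hc, h3,
    fun t htS => hmax t (htS.trans (Set.subset_insert w S))⟩

lemma IsBigCliqueOn.insert_of_exists_not_adj (h : IsBigCliqueOn G S s) (hwS : w ∉ S)
    (hw : ∃ x ∈ s, ¬ G.Adj x w) : IsBigCliqueOn G (insert w S) s := by
  obtain ⟨hsub, hc, h3, hmax⟩ := h
  refine ⟨hsub.trans (Set.subset_insert w S), hc, h3, fun t htS htc hst => hmax t ?_ htc hst⟩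
  intro y hy
  refine (htS hy).resolve_left ?_
  rintro rfl
  obtain ⟨x, hx, hxw⟩ := hw
  exact hxw (htc (hst hx) hy (by rintro rfl; exact hwS (hsub hx)))

lemma IsBigCliqueOn.subset_insert_neighbors (h : IsBigCliqueOn G (insert w S) s)
    (hws : w ∈ s) : ↑s ⊆ insert w {x ∈ S | G.Adj x w} := by
  intro x hx
  by_cases hxw : x = w
  · exact Or.inl hxw
  · exact Or.inr ⟨(h.1 hx).resolve_left hxw, h.2.1 hx hws hxw⟩

lemma isBigCliqueOn_insert_iff_of_pendant (hwS : w ∉ S)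
    (hN : ∀ x ∈ S, G.Adj x w → x = u) :
    IsBigCliqueOn G (insert w S) s ↔ IsBigCliqueOn G S s := by
  classical
  refine ⟨fun h => h.of_insert fun hws => ?_, fun h => h.insert_of_exists_not_adj hwS ?_⟩
  · have hsub : s ⊆ {w, u} := by
      intro x hx
      rcases h.subset_insert_neighbors hws hx with rfl | ⟨hxS, hxw⟩
      · simp
      · simp [hN x hxS hxw]
    have := (Finset.card_le_card hsub).trans (Finset.card_le_two (a := w) (b := u))
    have := h.2.2.1
    omega
  · obtain ⟨x, hx, hxu⟩ := Finset.exists_mem_ne (s := s) (by have := h.2.2.1; omega) u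
    exact ⟨x, hx, fun hxw => hxu (hN x (h.1 hx) hxw)⟩

lemma isBigCliqueOn_insert_iff_of_triangle [DecidableEq V] (hwS : w ∉ S) (hu : u ∈ S)
    (hv : v ∈ S) (huv : G.Adj u v) (huw : G.Adj u w) (hvw : G.Adj v w)
    (hN : ∀ x ∈ S, G.Adj x w → x = u ∨ x = v)
    (hbig : ∀ s, IsBigCliqueOn G S s → u ∉ s ∧ v ∉ s) :
    IsBigCliqueOn G (insert w S) s ↔ IsBigCliqueOn G S s ∨ s = {u, v, w} := by
  have htri : G.IsNClique 3 {u, v, w} := is3Clique_triple_iff.mpr ⟨huv, huw, hvw⟩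
  have htriS : ↑({u, v, w} : Finset V) ⊆ insert w S := by
    intro x hx
    simp only [Finset.coe_insert, Finset.coe_singleton, Set.mem_insert_iff,
      Set.mem_singleton_iff] at hx
    rcases hx with rfl | rfl | rfl
    exacts [Or.inr hu, Or.inr hv, Or.inl rfl]
  have hsub_tri (t : Finset V) (htS : ↑t ⊆ insert w S) (hwt : w ∈ t) (htc : G.IsClique ↑t) :
      t ⊆ {u, v, w} := by
    intro x hx
    rcases htS hx with rfl | hxS
    · simp
    · by_cases hxw : x = w
      · simp [hxw]
      · rcases hN x hxS (htc hx hwt hxw) with rfl | rfl <;> simp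
  constructor
  · intro h
    by_cases hws : w ∈ s
    · exact Or.inr (h.2.2.2 _ htriS htri.1 (hsub_tri s h.1 hws h.2.1)).symm
    · exact Or.inl (h.of_insert hws)
  · rintro (h | rfl)
    · obtain ⟨x, hx⟩ := (Finset.card_pos (s := s)).mp (by have := h.2.2.1; omega)
      refine h.insert_of_exists_not_adj hwS ⟨x, hx, fun hxw => ?_⟩
      rcases hN x (h.1 hx) hxw with rfl | rfl
      exacts [(hbig s h).1 hx, (hbig s h).2 hx]
    · exact ⟨htriS, htri.1, htri.2.ge, fun t htS htc hst =>
        (hsub_tri t htS (hst (by simp)) htc).antisymm hst⟩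

lemma sep_adj_insert_of_not_adj (hxw : ¬ G.Adj x w) :
    {y ∈ insert w S | G.Adj x y} = {y ∈ S | G.Adj x y} := by
  ext y
  simp only [Set.mem_ofPred_eq, Set.mem_insert_iff]
  constructor
  · rintro ⟨rfl | hy, hxy⟩
    exacts [absurd hxy hxw, ⟨hy, hxy⟩]
  · exact fun ⟨hy, hxy⟩ => ⟨Or.inr hy, hxy⟩

lemma ncard_sep_adj_insert_le (x : V) :
    {y ∈ insert w S | G.Adj x y}.ncard ≤ {y ∈ S | G.Adj x y}.ncard + 1 := by
  by_cases hxw : G.Adj x w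
  · refine le_of_eq_of_le (congrArg Set.ncard ?_) (Set.ncard_insert_le w _)
    ext y
    simp only [Set.mem_ofPred_eq, Set.mem_insert_iff]
    constructor
    · rintro ⟨rfl | hy, hxy⟩
      exacts [Or.inl rfl, Or.inr ⟨hy, hxy⟩]
    · rintro (rfl | ⟨hy, hxy⟩)
      exacts [⟨Or.inl rfl, hxw⟩, ⟨Or.inr hy, hxy⟩]
  · rw [sep_adj_insert_of_not_adj hxw]
    exact Nat.le_succ _

lemma connected_induce_insert (hS : (G.induce S).Connected) (hu : u ∈ S) (huw : G.Adj u w) :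
    (G.induce (insert w S)).Connected := by
  rw [connected_induce_iff_reachableIn] at hS ⊢
  have hreach : ∀ a ∈ insert w S, G.ReachableIn (insert w S) a u := by
    rintro a (rfl | ha)
    · exact .of_adj huw.symm (Set.mem_insert _ S) (Set.mem_insert_of_mem _ hu)
    · exact (hS.2 a ha u hu).mono (Set.subset_insert w S)
  exact ⟨Set.insert_nonempty w S, fun a ha b hb => (hreach a ha).trans (hreach b hb).symm⟩

end InsertVertex

section ContractInsert

variable {V : Type*} {G : SimpleGraph V} {S P : Set V} {u w : V}

local notation "R" => bigCliqueRel (G.induce S)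
local notation "R'" => bigCliqueRel (G.induce (insert w S))
local notation "ι" => Set.inclusion (Set.subset_insert w S)

lemma eq_of_mk_eq_mk_of_forall_notMem (hu : u ∈ S) (hbig : ∀ s, IsBigCliqueOn G S s → u ∉ s)
    {a : S} (h : Quot.mk R a = Quot.mk R ⟨u, hu⟩) : a.1 = u := by
  let isU : Quot R → Prop := Quot.lift (fun b : S => b.1 = u) fun b c hbc => by
    rcases (bigCliqueRel_induce_iff b c).mp hbc with rfl | ⟨s, hs, hb, hc⟩
    · rfl
    · exact propext ⟨fun h => absurd (h ▸ hb) (hbig s hs), fun h => absurd (h ▸ hc) (hbig s hs)⟩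
  simpa [isU] using congrArg isU h

/-- When `w` is added to `S`, the vertices of `P` become the node of `w` in the contraction and
all other big cliques are the old ones. -/
structure IsInsertionClass (G : SimpleGraph V) (S : Set V) (w : V) (P : Set V) : Prop where
  mem : w ∈ P
  isBigCliqueOn_insert : ∀ s, IsBigCliqueOn G S s → IsBigCliqueOn G (insert w S) s
  subset_or_isBigCliqueOn : ∀ s, IsBigCliqueOn G (insert w S) s →
    ↑s ⊆ P ∨ (IsBigCliqueOn G S s ∧ ∀ x ∈ s, x ∉ P)
  eq_or_exists : ∀ x ∈ P, x = w ∨ ∃ s, IsBigCliqueOn G (insert w S) s ∧ x ∈ s ∧ w ∈ s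

namespace IsInsertionClass

variable (hP : IsInsertionClass G S w P)
include hP

lemma mem_of_notMem {a : ↥(insert w S)} (ha : a.1 ∉ P) : a.1 ∈ S :=
  a.2.resolve_left fun h => ha (by rw [h]; exact hP.mem)

lemma mk_eq_mk_of_mk_insert_eq {a b : ↥(insert w S)} (h : Quot.mk R' a = Quot.mk R' b) :
    (a.1 ∈ P ↔ b.1 ∈ P) ∧
      ∀ (ha : a.1 ∈ S) (hb : b.1 ∈ S), a.1 ∉ P → Quot.mk R ⟨a.1, ha⟩ = Quot.mk R ⟨b.1, hb⟩ := by
  have hg := Quot.eqvGen_exact h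
  clear h
  induction hg with
  | rel a b hab =>
    rcases (bigCliqueRel_induce_iff a b).mp hab with rfl | ⟨s, hs, ha, hb⟩
    · exact ⟨Iff.rfl, fun _ _ _ => rfl⟩
    rcases hP.subset_or_isBigCliqueOn s hs with hsP | ⟨hs, hsP⟩
    · exact ⟨iff_of_true (hsP ha) (hsP hb), fun _ _ haP => absurd (hsP ha) haP⟩
    · exact ⟨iff_of_false (hsP _ ha) (hsP _ hb), fun _ _ _ =>
        Quot.sound ((bigCliqueRel_induce_iff _ _).mpr (Or.inr ⟨s, hs, ha, hb⟩))⟩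
  | refl => exact ⟨Iff.rfl, fun _ _ _ => rfl⟩
  | symm a b _ ih =>
    exact ⟨ih.1.symm, fun hb ha hbP => (ih.2 ha hb (mt ih.1.mp hbP)).symm⟩
  | trans a b c _ _ ih ih' =>
    refine ⟨ih.1.trans ih'.1, fun ha hc haP => ?_⟩
    have hbP : b.1 ∉ P := mt ih.1.mpr haP
    exact (ih.2 ha (hP.mem_of_notMem hbP) haP).trans (ih'.2 (hP.mem_of_notMem hbP) hc hbP)

lemma mk_insert_eq_mk_self_iff (a : ↥(insert w S)) :
    Quot.mk R' a = Quot.mk R' ⟨w, Set.mem_insert w S⟩ ↔ a.1 ∈ P := by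
  refine ⟨fun h => (hP.mk_eq_mk_of_mk_insert_eq h).1.mpr hP.mem, fun ha => ?_⟩
  rcases hP.eq_or_exists a.1 ha with h | ⟨s, hs, has, hws⟩
  · rw [show a = ⟨w, Set.mem_insert w S⟩ from Subtype.ext h]
  · exact Quot.sound ((bigCliqueRel_induce_iff _ _).mpr (Or.inr ⟨s, hs, has, hws⟩))

lemma mem_of_mk_insert_ne {a : ↥(insert w S)}
    (ha : Quot.mk R' a ≠ Quot.mk R' ⟨w, Set.mem_insert w S⟩) : a.1 ∈ S ∧ a.1 ∉ P := by
  have haP : a.1 ∉ P := fun h => ha ((hP.mk_insert_eq_mk_self_iff a).mpr h)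
  exact ⟨hP.mem_of_notMem haP, haP⟩

lemma exists_injective_hom :
    ∃ f : (contractBigCliques (G.induce (insert w S))).induce
        {Quot.mk R' ⟨w, Set.mem_insert w S⟩}ᶜ →g contractBigCliques (G.induce S),
      Function.Injective f ∧
        ∀ q hq (y : S), Quot.mk R' (ι y) = q → f ⟨q, hq⟩ = Quot.mk R y := by
  have hrep (q) (hq : q ≠ Quot.mk R' ⟨w, Set.mem_insert w S⟩) :
      ∃ y : S, Quot.mk R' (ι y) = q := by
    obtain ⟨a, rfl⟩ := q.exists_rep
    exact ⟨⟨a.1, (hP.mem_of_mk_insert_ne hq).1⟩, rfl⟩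
  let F : Quot R → Quot R' := Quot.lift (fun y => Quot.mk R' (ι y)) fun y z hyz => by
    rcases (bigCliqueRel_induce_iff y z).mp hyz with rfl | ⟨s, hs, hy, hz⟩
    · rfl
    · exact Quot.sound ((bigCliqueRel_induce_iff _ _).mpr
        (Or.inr ⟨s, hP.isBigCliqueOn_insert s hs, hy, hz⟩))
  let f : {q // q ∈ ({Quot.mk R' ⟨w, Set.mem_insert w S⟩}ᶜ : Set _)} → Quot R :=
    fun q => Quot.mk R (hrep q.1 q.2).choose
  have hval (q hq) (y : S) (hy : Quot.mk R' (ι y) = q) : f ⟨q, hq⟩ = Quot.mk R y := by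
    have hc := (hrep q hq).choose_spec
    exact (hP.mk_eq_mk_of_mk_insert_eq (hc.trans hy.symm)).2 _ _
      (hP.mem_of_mk_insert_ne fun h => hq (hc ▸ h)).2
  have hinj : Function.Injective f := fun q₁ q₂ h =>
    Subtype.ext ((hrep q₁.1 q₁.2).choose_spec.symm.trans
      ((congrArg F h).trans (hrep q₂.1 q₂.2).choose_spec))
  refine ⟨⟨f, ?_⟩, hinj, hval⟩
  rintro ⟨q₁, hq₁⟩ ⟨q₂, hq₂⟩ ⟨hne, x, y, hxy, rfl, rfl⟩
  refine ⟨fun h => hne (congrArg Subtype.val (hinj h)), ⟨x.1, (hP.mem_of_mk_insert_ne hq₁).1⟩,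
    ⟨y.1, (hP.mem_of_mk_insert_ne hq₂).1⟩, hxy, (hval _ _ _ rfl).symm, (hval _ _ _ rfl).symm⟩

lemma exists_of_adj_mk_self {q : Quot R'} (h : (contractBigCliques (G.induce (insert w S))).Adj
      (Quot.mk R' ⟨w, Set.mem_insert w S⟩) q) :
    ∃ x ∈ P, ∃ y : S, y.1 ∉ P ∧ G.Adj x y.1 ∧ Quot.mk R' (ι y) = q := by
  obtain ⟨hne, x, y, hxy, hx, rfl⟩ := h
  obtain ⟨hyS, hyP⟩ := hP.mem_of_mk_insert_ne hne.symm
  exact ⟨x.1, (hP.mk_insert_eq_mk_self_iff x).mp hx, ⟨y.1, hyS⟩, hyP, hxy, rfl⟩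

end IsInsertionClass

end ContractInsert

section Extension

variable {V : Type*} {G : SimpleGraph V} {T : Set V} {u v w : V}

lemma isAcyclic_contractBigCliques_insert_of_pendant
    (hT : (contractBigCliques (G.induce T)).IsAcyclic)
    (hP : IsInsertionClass G T w {w}) (hu : u ∈ T) (hN : ∀ x ∈ T, G.Adj x w → x = u) :
    (contractBigCliques (G.induce (insert w T))).IsAcyclic := by
  obtain ⟨f, hf, -⟩ := hP.exists_injective_hom
  refine isAcyclic_of_isAcyclic_induce_compl_singleton (hT.comap f hf) fun a b ha hb _ => ?_
  have hK (q) (hq : (contractBigCliques (G.induce (insert w T))).Adj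
      (Quot.mk _ ⟨w, Set.mem_insert w T⟩) q) :
      q = Quot.mk _ ⟨u, Set.mem_insert_of_mem w hu⟩ := by
    obtain ⟨x, rfl, y, -, hxy, rfl⟩ := hP.exists_of_adj_mk_self hq
    exact congrArg _ (Subtype.ext (hN y.1 y.2 hxy.symm))
  rw [hK a ha, hK b hb]

lemma isAcyclic_contractBigCliques_insert_of_triangle
    (hT : (contractBigCliques (G.induce T)).IsAcyclic)
    (hP : IsInsertionClass G T w {u, v, w}) (hu : u ∈ T) (hv : v ∈ T) (huv : G.Adj u v)
    (hN : ∀ x ∈ T, G.Adj x w → x = u ∨ x = v)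
    (hbig : ∀ s, IsBigCliqueOn G T s → u ∉ s ∧ v ∉ s) :
    (contractBigCliques (G.induce (insert w T))).IsAcyclic := by
  obtain ⟨f, hf, hval⟩ := hP.exists_injective_hom
  set R := bigCliqueRel (G.induce T)
  set B : Set (Quot R) := {Quot.mk R ⟨u, hu⟩, Quot.mk R ⟨v, hv⟩}
  have hcls (y : T) (hy : y.1 ∉ ({u, v, w} : Set V)) : Quot.mk R y ∉ B := by
    rintro (h | h)
    · exact hy (Or.inl (eq_of_mk_eq_mk_of_forall_notMem hu (fun s hs => (hbig s hs).1) h))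
    · exact hy (Or.inr (Or.inl
        (eq_of_mk_eq_mk_of_forall_notMem hv (fun s hs => (hbig s hs).2) h)))
  have hB : (contractBigCliques (G.induce T)).IsClique B :=
    isClique_pair.mpr fun h => ⟨h, ⟨u, hu⟩, ⟨v, hv⟩, huv, rfl, rfl⟩
  have hfB (z) : f z ∉ B := by
    obtain ⟨q, hq⟩ := z
    obtain ⟨a, rfl⟩ := q.exists_rep
    obtain ⟨haT, haP⟩ := hP.mem_of_mk_insert_ne hq
    rw [hval _ hq ⟨a.1, haT⟩ rfl]
    exact hcls _ haP
  have hK (q) (hq : (contractBigCliques (G.induce (insert w T))).Adj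
      (Quot.mk _ ⟨w, Set.mem_insert w T⟩) q) :
      ∃ x ∈ B, (contractBigCliques (G.induce T)).Adj x (f ⟨q, hq.ne'⟩) := by
    obtain ⟨x, hxP, y, hyP, hxy, rfl⟩ := hP.exists_of_adj_mk_self hq
    rw [hval _ hq.ne' y rfl]
    rcases hxP with rfl | rfl | rfl
    · exact ⟨_, Or.inl rfl, fun h => hcls y hyP (h ▸ Or.inl rfl), ⟨x, hu⟩, y, hxy, rfl, rfl⟩
    · exact ⟨_, Or.inr rfl, fun h => hcls y hyP (h ▸ Or.inr rfl), ⟨x, hv⟩, y, hxy, rfl, rfl⟩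
    · rcases hN y.1 y.2 hxy.symm with h | h <;> simp [h] at hyP
  refine isAcyclic_of_isAcyclic_induce_compl_singleton (hT.comap f hf) fun a b ha hb hab =>
    congrArg Subtype.val (hf (a₁ := ⟨a, ha.ne'⟩) (a₂ := ⟨b, hb.ne'⟩) ?_)
  exact hT.apply_eq_of_reachable f hB hfB ((reachable_induce_iff ha.ne' hb.ne').mpr hab)
    (hK a ha) (hK b hb)

lemma ncard_sep_adj_insert_le_three [DecidableEq V] (huv : G.Adj u v)
    (hN : ∀ x ∈ T, G.Adj x w → x = u ∨ x = v)
    (hdegu : {y ∈ T | G.Adj u y}.ncard ≤ 2) (hdegv : {y ∈ T | G.Adj v y}.ncard ≤ 2)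
    {x : V} (hx : x ∈ ({u, v, w} : Finset V)) : {y ∈ insert w T | G.Adj x y}.ncard ≤ 3 := by
  simp only [Finset.mem_insert, Finset.mem_singleton] at hx
  rcases hx with rfl | rfl | rfl
  · linarith [ncard_sep_adj_insert_le (G := G) (S := T) (w := w) x]
  · linarith [ncard_sep_adj_insert_le (G := G) (S := T) (w := w) x]
  · have hsub : {y ∈ insert x T | G.Adj x y} ⊆ {u, v} := by
      rintro y ⟨rfl | hy, hxy⟩
      exacts [absurd hxy (G.loopless.irrefl _), hN y hy hxy.symm]
    linarith [Set.ncard_le_ncard hsub (Set.toFinite _), Set.ncard_pair huv.ne]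

theorem isBloatedTree_induce_insert_of_pendant (hT : IsBloatedTree (G.induce T)) (hwT : w ∉ T)
    (hu : u ∈ T) (huw : G.Adj u w) (hN : ∀ x ∈ T, G.Adj x w → x = u)
    (hdeg : {y ∈ T | G.Adj u y}.ncard ≤ 2) : IsBloatedTree (G.induce (insert w T)) := by
  rw [isBloatedTree_induce_iff] at hT ⊢
  obtain ⟨hedge, hdeg', htree⟩ := hT
  have hbig (s) := isBigCliqueOn_insert_iff_of_pendant (s := s) hwT hN
  have hP : IsInsertionClass G T w {w} :=
    ⟨rfl, fun s => (hbig s).mpr, fun s hs => Or.inr ⟨(hbig s).mp hs,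
      fun x hx hxw => hwT (hxw ▸ ((hbig s).mp hs).1 hx)⟩, fun _ hx => Or.inl hx⟩
  refine ⟨fun a b hab s t hs ht => hedge a b hab s t ((hbig s).mp hs) ((hbig t).mp ht),
    fun s hs x hx => ?_, connected_contractBigCliques_iff.mpr (connected_induce_insert
      (connected_contractBigCliques_iff.mp htree.connected) hu huw),
    isAcyclic_contractBigCliques_insert_of_pendant htree.isAcyclic hP hu hN⟩
  rw [hbig] at hs
  by_cases hxu : x = u
  · have := ncard_sep_adj_insert_le (G := G) (S := T) (w := w) x
    have := hs.2.2.1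
    subst hxu
    omega
  · rw [sep_adj_insert_of_not_adj fun hxw => hxu (hN x (hs.1 hx) hxw)]
    exact hdeg' s hs x hx

theorem isBloatedTree_induce_insert_of_triangle (hT : IsBloatedTree (G.induce T)) (hwT : w ∉ T)
    (hu : u ∈ T) (hv : v ∈ T) (huv : G.Adj u v) (huw : G.Adj u w) (hvw : G.Adj v w)
    (hN : ∀ x ∈ T, G.Adj x w → x = u ∨ x = v)
    (hdegu : {y ∈ T | G.Adj u y}.ncard ≤ 2) (hdegv : {y ∈ T | G.Adj v y}.ncard ≤ 2)
    (hbig : ∀ s, IsBigCliqueOn G T s → u ∉ s ∧ v ∉ s) :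
    IsBloatedTree (G.induce (insert w T)) := by
  classical
  rw [isBloatedTree_induce_iff] at hT ⊢
  obtain ⟨hedge, hdeg, htree⟩ := hT
  have hbig' (s) := isBigCliqueOn_insert_iff_of_triangle (s := s) hwT hu hv huv huw hvw hN hbig
  have hdisj (s) (hs : IsBigCliqueOn G T s) : ∀ x ∈ s, x ∉ ({u, v, w} : Set V) := by
    rintro x hx (rfl | rfl | rfl)
    exacts [(hbig s hs).1 hx, (hbig s hs).2 hx, hwT (hs.1 hx)]
  have hP : IsInsertionClass G T w {u, v, w} := by
    refine ⟨by simp, fun s hs => (hbig' s).mpr (Or.inl hs), fun s hs => ?_, fun x hx =>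
      Or.inr ⟨{u, v, w}, (hbig' _).mpr (Or.inr rfl), by simpa using hx, by simp⟩⟩
    rcases (hbig' s).mp hs with hs | rfl
    exacts [Or.inr ⟨hs, hdisj s hs⟩, Or.inl (by simp)]
  refine ⟨fun a b hab s t hs ht has hbs hat hbt => ?_, fun s hs x hx => ?_,
    connected_contractBigCliques_iff.mpr (connected_induce_insert
      (connected_contractBigCliques_iff.mp htree.connected) hu huw),
    isAcyclic_contractBigCliques_insert_of_triangle htree.isAcyclic hP hu hv huv hN hbig⟩
  · rcases (hbig' s).mp hs with hs | rfl <;> rcases (hbig' t).mp ht with ht | rfl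
    · exact hedge a b hab s t hs ht has hbs hat hbt
    · exact absurd (by simpa using hat) (hdisj s hs a has)
    · exact absurd (by simpa using has) (hdisj t ht a hat)
    · rfl
  · rcases (hbig' s).mp hs with hs | rfl
    · rw [sep_adj_insert_of_not_adj fun hxw => hdisj s hs x hx ?_]
      · exact hdeg s hs x hx
      · rcases hN x (hs.1 hx) hxw with rfl | rfl <;> simp
    rw [(is3Clique_triple_iff.mpr ⟨huv, huw, hvw⟩).2]
    exact ncard_sep_adj_insert_le_three huv hN hdegu hdegv hx

end Extension

section MaximalBloatedTree

variable {V : Type*} {G : SimpleGraph V} {S T : Set V} {s : Finset V} {a b u v u' v' z : V}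

lemma notMem_of_isBigCliqueOn (hN : {y ∈ S | G.Adj u y} ⊆ {a, b}) (hab : ¬ G.Adj a b)
    (hs : IsBigCliqueOn G S s) : u ∉ s := by
  classical
  intro hu
  obtain ⟨x, hx, y, hy, hxy⟩ := Finset.one_lt_card.mp
    (by rw [Finset.card_erase_of_mem hu]; have := hs.2.2.1; omega : 1 < (s.erase u).card)
  rw [Finset.mem_erase] at hx hy
  have hxab : x ∈ ({a, b} : Set V) := hN ⟨hs.1 hx.2, hs.2.1 hu hx.2 hx.1.symm⟩
  have hyab : y ∈ ({a, b} : Set V) := hN ⟨hs.1 hy.2, hs.2.1 hu hy.2 hy.1.symm⟩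
  have hadj : G.Adj x y := hs.2.1 hx.2 hy.2 hxy
  rcases hxab with rfl | rfl <;> rcases hyab with rfl | rfl
  exacts [hxy rfl, hab hadj, hab hadj.symm, hxy rfl]

lemma reachableIn_of_isBloatedTree_induce (hT : IsBloatedTree (G.induce T)) :
    ∀ a ∈ T, ∀ b ∈ T, G.ReachableIn T a b :=
  (connected_induce_iff_reachableIn.mp (connected_contractBigCliques_iff.mp hT.2.2.connected)).2

lemma not_isBloatedTree_induce_insert
    (hmax : ∀ T' : Set V, T ⊆ T' → IsBloatedTree (G.induce T') → T' = T) (hz : z ∉ T) :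
    ¬ IsBloatedTree (G.induce (insert z T)) := fun h =>
  hz (hmax _ (Set.subset_insert z T) h ▸ Set.mem_insert z T)

lemma exists_neighbor_not_reachableIn_compl (hG : G.Connected)
    (hT : IsBloatedTree (G.induce T))
    (hmax : ∀ T' : Set V, T ⊆ T' → IsBloatedTree (G.induce T') → T' = T)
    (hu : u ∈ T) (hv : v ∈ T) (huv : G.Adj u v) (hdu : {y ∈ T | G.Adj u y}.ncard = 2)
    (hcu : ¬ (G.induce {u}ᶜ).Connected) :
    ∃ u', {y ∈ T | G.Adj u y} = {v, u'} ∧ ¬ G.ReachableIn {u}ᶜ u' v := by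
  obtain ⟨x, y, hxy, hset⟩ := Set.ncard_eq_two.mp hdu
  obtain ⟨u', hNu⟩ : ∃ u', {y ∈ T | G.Adj u y} = {v, u'} := by
    have hvN : v ∈ ({x, y} : Set V) := hset ▸ ⟨hv, huv⟩
    rcases hvN with rfl | rfl
    exacts [⟨y, hset⟩, ⟨x, hset.trans (Set.pair_comm _ _)⟩]
  refine ⟨u', hNu, fun hu'v => hcu ?_⟩
  have hTv (t) (ht : t ∈ T) (htu : t ≠ u) : G.ReachableIn {u}ᶜ t v := by
    obtain ⟨n, c, htn, hnc, rfl⟩ :=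
      (reachableIn_of_isBloatedTree_induce hT t ht u hu).exists_adj_mem (A := {u}) htu rfl
    have hn : n ∈ ({v, u'} : Set V) := hNu ▸ ⟨htn.right_mem.1, hnc.symm⟩
    have htn' : G.ReachableIn {c}ᶜ t n := htn.mono fun x hx => hx.2
    rcases hn with rfl | rfl
    exacts [htn', htn'.trans hu'v]
  have hall (a) (hau : a ≠ u) : G.ReachableIn {u}ᶜ a v := by
    by_contra ha
    obtain ⟨z, c, haz, hzc, rfl⟩ :=
      (reachableIn_univ_iff.mpr (hG.preconnected a u)).exists_adj_mem (A := {u}) hau rfl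
    have hz : ¬ G.ReachableIn {c}ᶜ z v := fun h => ha ((haz.mono fun x hx => hx.2).trans h)
    have hzT : z ∉ T := fun hzT => hz (hTv z hzT hzc.ne)
    refine not_isBloatedTree_induce_insert hmax hzT
      (isBloatedTree_induce_insert_of_pendant hT hzT hu hzc.symm (fun t ht htz => ?_) hdu.le)
    by_contra htu
    exact hz ((ReachableIn.of_adj htz.symm hzc.ne htu).trans (hTv t ht htu))
  rw [connected_induce_iff_reachableIn]
  exact ⟨⟨v, huv.ne'⟩, fun a ha b hb => (hall a ha).trans (hall b hb).symm⟩

lemma eq_or_eq_of_adj_of_reachableIn_compl (hTconn : ∀ a ∈ T, ∀ b ∈ T, G.ReachableIn T a b)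
    (hu : u ∈ T) (huv : G.Adj u v)
    (hNu : {y ∈ T | G.Adj u y} = {v, u'}) (hNv : {y ∈ T | G.Adj v y} = {u, v'})
    (hu' : ¬ G.ReachableIn {u}ᶜ u' v) (hv' : ¬ G.ReachableIn {v}ᶜ v' u)
    (hz : G.Adj u z) (hzv : z ≠ v) (hzv' : G.ReachableIn {u}ᶜ z v)
    {t : V} (ht : t ∈ T) (htz : G.Adj t z) : t = u ∨ t = v := by
  by_contra! htuv
  obtain ⟨n, c, htn, hnc, hc⟩ :=
    (hTconn t ht u hu).exists_adj_mem (A := {u, v}) (by simp [htuv.1, htuv.2]) (by simp)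
  obtain ⟨hnT, hnuv⟩ := htn.right_mem
  have hnu : n ≠ u := fun h => hnuv (Or.inl h)
  have hnv : n ≠ v := fun h => hnuv (Or.inr h)
  rcases hc with rfl | rfl
  · have hn : n ∈ ({v, u'} : Set V) := hNu ▸ ⟨hnT, hnc.symm⟩
    rcases hn with rfl | rfl
    · exact hnv rfl
    · exact hu' ((htn.mono fun x hx hxc => hx.2 (Or.inl hxc)).symm.trans
        ((ReachableIn.of_adj htz htuv.1 hz.ne').trans hzv'))
  · have hn : n ∈ ({u, v'} : Set V) := hNv ▸ ⟨hnT, hnc.symm⟩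
    rcases hn with rfl | rfl
    · exact hnu rfl
    · exact hv' ((htn.mono fun x hx hxc => hx.2 (Or.inr hxc)).symm.trans
        ((ReachableIn.of_adj htz htuv.2 hzv).trans (ReachableIn.of_adj hz.symm hzv huv.ne)))

lemma not_reachableIn_compl_of_adj (hT : IsBloatedTree (G.induce T))
    (hmax : ∀ T' : Set V, T ⊆ T' → IsBloatedTree (G.induce T') → T' = T)
    (hu : u ∈ T) (hv : v ∈ T) (huv : G.Adj u v)
    (hdu : {y ∈ T | G.Adj u y}.ncard ≤ 2) (hdv : {y ∈ T | G.Adj v y}.ncard ≤ 2)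
    (hNu : {y ∈ T | G.Adj u y} = {v, u'}) (hNv : {y ∈ T | G.Adj v y} = {u, v'})
    (hu' : ¬ G.ReachableIn {u}ᶜ u' v) (hv' : ¬ G.ReachableIn {v}ᶜ v' u)
    (hz : G.Adj u z) (hzv : z ≠ v) : ¬ G.ReachableIn {u}ᶜ z v := by
  intro hzv'
  have hzT : z ∉ T := fun hzT => by
    have hzN : z ∈ ({v, u'} : Set V) := hNu ▸ ⟨hzT, hz⟩
    rcases hzN with rfl | rfl
    exacts [hzv rfl, hu' hzv']
  have hN (t) (ht : t ∈ T) (htz : G.Adj t z) : t = u ∨ t = v :=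
    eq_or_eq_of_adj_of_reachableIn_compl (reachableIn_of_isBloatedTree_induce hT) hu huv
      hNu hNv hu' hv' hz hzv hzv' ht htz
  have hu'N : u' ∈ {y ∈ T | G.Adj u y} := hNu ▸ Set.mem_insert_of_mem v rfl
  have hv'N : v' ∈ {y ∈ T | G.Adj v y} := hNv ▸ Set.mem_insert_of_mem u rfl
  have hbig (s) (hs : IsBigCliqueOn G T s) : u ∉ s ∧ v ∉ s :=
    ⟨notMem_of_isBigCliqueOn hNu.le (fun h => hu' (.of_adj h.symm hu'N.2.ne' huv.ne')) hs,
      notMem_of_isBigCliqueOn hNv.le (fun h => hv' (.of_adj h.symm hv'N.2.ne' huv.ne)) hs⟩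
  by_cases hvz : G.Adj v z
  · exact not_isBloatedTree_induce_insert hmax hzT (isBloatedTree_induce_insert_of_triangle
      hT hzT hu hv huv hz hvz hN hdu hdv hbig)
  · exact not_isBloatedTree_induce_insert hmax hzT (isBloatedTree_induce_insert_of_pendant
      hT hzT hu hz (fun t ht htz => (hN t ht htz).resolve_right (by rintro rfl; exact hvz htz))
      hdu)

end MaximalBloatedTree

theorem bridge_of_maximal_bloated_tree_general (V : Type)
    (G : SimpleGraph V) (hG : G.Connected)
    (T : Set V) (hT : IsBloatedTree (G.induce T))
    (hmax : ∀ T' : Set V, T ⊆ T' → IsBloatedTree (G.induce T') → T' = T)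
    (u v : V) (hu : u ∈ T) (hv : v ∈ T) (huv : G.Adj u v)
    (hdu : ({w ∈ T | G.Adj u w}).ncard = 2)
    (hdv : ({w ∈ T | G.Adj v w}).ncard = 2)
    (hcu : ¬ (G.induce {w | w ≠ u}).Connected)
    (hcv : ¬ (G.induce {w | w ≠ v}).Connected) :
    ¬ (G.deleteEdges {s(u, v)}).Connected := by
  obtain ⟨u', hNu, hu'⟩ :=
    exists_neighbor_not_reachableIn_compl hG hT hmax hu hv huv hdu hcu
  obtain ⟨v', hNv, hv'⟩ :=
    exists_neighbor_not_reachableIn_compl hG hT hmax hv hu huv.symm hdv hcv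
  intro hconn
  obtain ⟨n, c, hvn, hnc, rfl⟩ := (reachableIn_univ_iff.mpr (hconn.preconnected v u)).exists_adj_mem
    (A := {u}) huv.ne' rfl
  rw [deleteEdges_adj] at hnc
  have hnv : n ≠ v := by
    rintro rfl
    exact hnc.2 (by simp [Sym2.eq_swap])
  exact not_reachableIn_compl_of_adj hT hmax hu hv huv hdu.le hdv.le hNu hNv hu' hv' hnc.1.symm hnv
    ((hvn.mono_graph (deleteEdges_le _)).mono fun x hx => hx.2).symm

/-- **Lemma 3.3.** In a connected graph `G` with a maximal induced bloated tree `T`,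
if `u, v ∈ T` are adjacent, both have degree two in `T`, and both are cut vertices
of `G`, then `uv` is a bridge of `G`. -/
theorem bridge_of_maximal_bloated_tree (V : Type) [Fintype V]
    (G : SimpleGraph V) (hG : G.Connected)
    (T : Set V) (hT : IsBloatedTree (G.induce T))
    (hmax : ∀ T' : Set V, T ⊆ T' → IsBloatedTree (G.induce T') → T' = T)
    (u v : V) (hu : u ∈ T) (hv : v ∈ T) (huv : G.Adj u v)
    (hdu : ({w ∈ T | G.Adj u w}).ncard = 2)
    (hdv : ({w ∈ T | G.Adj v w}).ncard = 2)
    (hcu : ¬ (G.induce {w | w ≠ u}).Connected)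
    (hcv : ¬ (G.induce {w | w ≠ v}).Connected) :
    ¬ (G.deleteEdges {s(u, v)}).Connected :=
  bridge_of_maximal_bloated_tree_general V G hG T hT hmax u v hu hv huv hdu hdv hcu hcv
end

section
/- Every tree T with at least ℓ leaves has a subtree which contains at least √ℓ of the leaves of T and has no two adjacent branching vertices (where a branching vertex of the subtree is a vertex of degree at least 3 in the subtree). -/
open SimpleGraph

/-!
Root the tree at a vertex `v`. For every rooted subtree one builds two subtrees without adjacent
branching vertices: `S₁`, in which no neighbour of the root branches, and `S₂`, in which the root
has degree at most one. `S₁` joins the `S₂`'s of all children `c` of the root to the root, so each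
`c` has degree at most two; `S₂` hangs the `S₁` of a single child below the root, chosen to contain
the most leaves. Writing `a_c`, `b_c` for the leaf counts of the children's `S₁`, `S₂`, and `e ≤ 1`
for the root, the number of leaves is at most `e + ∑ a_c b_c ≤ (e + ∑ b_c) (e + max a_c)`, i.e. at
most the product of the leaf counts of `S₁` and `S₂`. Hence one of them has at least `√ℓ` leaves.
-/

lemma Finset.exists_subset_card_le_one_forall_le_sum {α : Type*} (C : Finset α) (f : α → ℕ) :
    ∃ C' ⊆ C, C'.card ≤ 1 ∧ ∀ c ∈ C, f c ≤ ∑ c' ∈ C', f c' := by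
  rcases C.eq_empty_or_nonempty with rfl | hC
  · exact ⟨∅, subset_rfl, by simp, by simp⟩
  · obtain ⟨c, hc, hmax⟩ := C.exists_max_image f hC
    exact ⟨{c}, by simpa using hc, by simp, by simpa using hmax⟩

lemma Finset.add_sum_mul_le_mul {α : Type*} (C : Finset α) (a b : α → ℕ) {e M : ℕ}
    (he : e ≤ 1) (ha : ∀ c ∈ C, a c ≤ M) :
    e + ∑ c ∈ C, a c * b c ≤ (e + ∑ c ∈ C, b c) * (e + M) := by
  have hsum : ∑ c ∈ C, a c * b c ≤ M * ∑ c ∈ C, b c := by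
    rw [Finset.mul_sum]
    gcongr with c hc
    exact ha c hc
  generalize ∑ c ∈ C, a c * b c = s at hsum ⊢
  generalize ∑ c ∈ C, b c = t at hsum ⊢
  interval_cases e <;> nlinarith

lemma sqrt_le_or_sqrt_le_of_le_mul {ℓ a b : ℕ} (h : ℓ ≤ a * b) :
    √(ℓ : ℝ) ≤ a ∨ √(ℓ : ℝ) ≤ b := by
  by_contra! hlt
  have := mul_lt_mul'' hlt.1 hlt.2 (Nat.cast_nonneg a) (Nat.cast_nonneg b)
  rw [Real.mul_self_sqrt (Nat.cast_nonneg ℓ)] at this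
  exact h.not_gt (by exact_mod_cast this)

def glue {V : Type*} (v : V) (C : Finset V) (S : V → Set V) : Set V := insert v (⋃ c ∈ C, S c)

lemma mem_glue {V : Type*} {v x : V} {C : Finset V} {S : V → Set V} :
    x ∈ glue v C S ↔ x = v ∨ ∃ c ∈ C, x ∈ S c := by
  simp [glue]

namespace SimpleGraph

variable {V : Type*} {T : SimpleGraph V}

noncomputable def degIn (T : SimpleGraph V) (S : Set V) (u : V) : ℕ := {w ∈ S | T.Adj u w}.ncard

def NoAdjacentBranching (T : SimpleGraph V) (S : Set V) : Prop :=
  ∀ u ∈ S, ∀ w ∈ S, T.Adj u w → ¬(3 ≤ T.degIn S u ∧ 3 ≤ T.degIn S w)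

structure IsRootedSubtree (T : SimpleGraph V) (A : Set V) (v : V) (S : Set V) : Prop where
  subset : S ⊆ A
  root_mem : v ∈ S
  connected : (T.induce S).Connected

lemma IsAcyclic.eq_of_adj_of_walk_avoiding (hT : T.IsAcyclic) {v c c' : V} (hc : T.Adj v c)
    (hc' : T.Adj v c') (p : T.Walk c c') (hp : v ∉ p.support) : c = c' := by
  have hbridge := isBridge_iff_forall_walk_mem_edges.mp
    (isAcyclic_iff_forall_adj_isBridge.mp hT hc) (p.reverse.cons hc')
  rw [Walk.edges_cons, List.mem_cons] at hbridge
  rcases hbridge with h | h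
  · simpa [hc.ne'] using h
  · exact absurd (by simpa using p.reverse.fst_mem_support_of_mem_edges h) hp

def branch (T : SimpleGraph V) (A : Set V) (v c : V) : Set V :=
  {x | ∃ p : T.Walk c x, ∀ y ∈ p.support, y ∈ A \ {v}}

variable {A : Set V} {v c c' x y : V}

lemma branch_subset : T.branch A v c ⊆ A \ {v} := fun x ⟨p, hp⟩ => hp x p.end_mem_support

lemma mem_branch_self (hc : c ∈ A \ {v}) : c ∈ T.branch A v c :=
  ⟨.nil, by simpa using hc⟩

lemma mem_branch_of_adj (hx : x ∈ T.branch A v c) (hy : y ∈ A \ {v}) (hxy : T.Adj x y) :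
    y ∈ T.branch A v c := by
  obtain ⟨p, hp⟩ := hx
  refine ⟨p.concat hxy, fun z hz => ?_⟩
  rw [Walk.support_concat, List.mem_append, List.mem_singleton] at hz
  rcases hz with hz | rfl
  · exact hp z hz
  · exact hy

lemma IsAcyclic.eq_of_mem_branch (hT : T.IsAcyclic) (hc : T.Adj v c) (hc' : T.Adj v c')
    (hx : x ∈ T.branch A v c) (hx' : x ∈ T.branch A v c') : c = c' := by
  obtain ⟨p, hp⟩ := hx
  obtain ⟨q, hq⟩ := hx'
  refine hT.eq_of_adj_of_walk_avoiding hc hc' (p.append q.reverse) fun hv => ?_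
  rw [Walk.mem_support_append_iff, Walk.support_reverse, List.mem_reverse] at hv
  rcases hv with hv | hv
  · exact (hp v hv).2 rfl
  · exact (hq v hv).2 rfl

lemma connected_induce_branch (hc : c ∈ A \ {v}) : (T.induce (T.branch A v c)).Connected := by
  classical
  refine induce_connected_of_patches c (mem_branch_self hc) fun {x} ⟨p, hp⟩ => ?_
  refine ⟨{y | y ∈ p.support}, fun y hy => ⟨p.takeUntil y hy, fun z hz =>
    hp z (p.support_takeUntil_subset_support hy hz)⟩, p.start_mem_support, p.end_mem_support,
    p.connected_induce_support.preconnected _ _⟩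

lemma subset_glue_branch {C : Finset V} (hA : (T.induce A).Connected) (hv : v ∈ A)
    (hC : ∀ c ∈ A, T.Adj v c → c ∈ C) : A ⊆ glue v C (T.branch A v) := by
  have hclosed : ∀ {x y}, x ∈ glue v C (T.branch A v) → T.Adj x y → y ∈ A →
      y ∈ glue v C (T.branch A v) := by
    intro x y hx hxy hyA
    rw [mem_glue] at hx ⊢
    by_cases hyv : y = v
    · exact Or.inl hyv
    rcases hx with rfl | ⟨c, hc, hxc⟩
    · exact Or.inr ⟨y, hC y hyA hxy, mem_branch_self ⟨hyA, hyv⟩⟩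
    · exact Or.inr ⟨c, hc, mem_branch_of_adj hxc ⟨hyA, hyv⟩ hxy⟩
  intro x hx
  obtain ⟨p⟩ := hA.preconnected ⟨v, hv⟩ ⟨x, hx⟩
  suffices ∀ {a b : A} (_ : (T.induce A).Walk a b), a.1 ∈ glue v C (T.branch A v) →
      b.1 ∈ glue v C (T.branch A v) from this p (Set.mem_insert v _)
  intro a b q
  induction q with
  | nil => exact id
  | cons h _ ih => exact fun ha => ih (hclosed ha h (Subtype.prop _))

structure IsPendantFamily (T : SimpleGraph V) (v : V) (C : Finset V) (S : V → Set V) : Prop where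
  adj : ∀ c ∈ C, T.Adj v c
  self_mem : ∀ c ∈ C, c ∈ S c
  root_notMem : ∀ c ∈ C, v ∉ S c
  eq_of_adj_root : ∀ c ∈ C, ∀ x ∈ S c, T.Adj v x → x = c
  not_adj : ∀ c ∈ C, ∀ c' ∈ C, c ≠ c' → ∀ x ∈ S c, ∀ y ∈ S c', ¬T.Adj x y
  pairwiseDisjoint : (C : Set V).PairwiseDisjoint S

variable {C C' : Finset V} {S S' : V → Set V}

lemma isPendantFamily_branch (hT : T.IsAcyclic) (hC : ∀ c ∈ C, c ∈ A ∧ T.Adj v c) :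
    T.IsPendantFamily v C (T.branch A v) where
  adj c hc := (hC c hc).2
  self_mem c hc := mem_branch_self ⟨(hC c hc).1, (hC c hc).2.ne'⟩
  root_notMem _ _ h := (branch_subset h).2 rfl
  eq_of_adj_root c hc _ hx hvx :=
    (hT.eq_of_mem_branch (hC c hc).2 hvx hx (mem_branch_self (branch_subset hx))).symm
  not_adj c hc c' hc' hne _ hx _ hy hxy := hne <| hT.eq_of_mem_branch (hC c hc).2 (hC c' hc').2
    (mem_branch_of_adj hx (branch_subset hy) hxy) hy
  pairwiseDisjoint c hc c' hc' hne := Set.disjoint_left.mpr fun _ hx hx' =>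
    hne (hT.eq_of_mem_branch (hC c hc).2 (hC c' hc').2 hx hx')

namespace IsPendantFamily

lemma mono (hF : T.IsPendantFamily v C S) (hC : C' ⊆ C) (hS : ∀ c ∈ C', S' c ⊆ S c)
    (hself : ∀ c ∈ C', c ∈ S' c) : T.IsPendantFamily v C' S' where
  adj c hc := hF.adj c (hC hc)
  self_mem := hself
  root_notMem c hc h := hF.root_notMem c (hC hc) (hS c hc h)
  eq_of_adj_root c hc _ hx := hF.eq_of_adj_root c (hC hc) _ (hS c hc hx)
  not_adj c hc c' hc' hne _ hx _ hy :=
    hF.not_adj c (hC hc) c' (hC hc') hne _ (hS c hc hx) _ (hS c' hc' hy)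
  pairwiseDisjoint := (hF.pairwiseDisjoint.subset (by simpa using hC)).mono_on hS

lemma isRootedSubtree_glue (hF : T.IsPendantFamily v C S) (hv : v ∈ A)
    (hsub : ∀ c ∈ C, S c ⊆ A) (hconn : ∀ c ∈ C, (T.induce (S c)).Connected) :
    T.IsRootedSubtree A v (glue v C S) where
  subset x hx := by
    rcases mem_glue.mp hx with rfl | ⟨c, hc, hxc⟩
    exacts [hv, hsub c hc hxc]
  root_mem := Set.mem_insert v _
  connected := by
    refine induce_connected_of_patches v (Set.mem_insert v _) fun {x} hx => ?_
    rcases mem_glue.mp hx with rfl | ⟨c, hc, hxc⟩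
    · exact ⟨_, subset_rfl, hx, hx, .rfl⟩
    · have hpatch : {v, c} ∪ S c ⊆ glue v C S := by
        refine Set.union_subset (Set.pair_subset (Set.mem_insert v _) ?_) fun y hy => ?_
        exacts [mem_glue.mpr (Or.inr ⟨c, hc, hF.self_mem c hc⟩), mem_glue.mpr (Or.inr ⟨c, hc, hy⟩)]
      refine ⟨_, hpatch, Or.inl (Set.mem_insert v _), Or.inr hxc, ?_⟩
      exact (induce_union_connected (induce_pair_connected_of_adj (hF.adj c hc)).preconnected
        (hconn c hc).preconnected ⟨c, by simp, hF.self_mem c hc⟩).preconnected _ _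

lemma eq_or_mem_of_adj (hF : T.IsPendantFamily v C S) {u w : V} (hc : c ∈ C) (hu : u ∈ S c)
    (hw : w ∈ glue v C S) (huw : T.Adj u w) : (u = c ∧ w = v) ∨ w ∈ S c := by
  rcases mem_glue.mp hw with rfl | ⟨c', hc', hwc'⟩
  · exact Or.inl ⟨hF.eq_of_adj_root c hc u hu huw.symm, rfl⟩
  · obtain rfl : c = c' := by_contra fun hne => hF.not_adj c hc c' hc' hne u hu w hwc' huw
    exact Or.inr hwc'

lemma degIn_glue_root (hF : T.IsPendantFamily v C S) : T.degIn (glue v C S) v = C.card := by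
  rw [degIn, ← Set.ncard_coe_finset]
  congr 1
  ext w
  refine ⟨fun ⟨hw, hvw⟩ => ?_, fun hw =>
    ⟨mem_glue.mpr (Or.inr ⟨w, hw, hF.self_mem w hw⟩), hF.adj w hw⟩⟩
  rcases mem_glue.mp hw with rfl | ⟨c, hc, hwc⟩
  · exact absurd hvw (T.loopless.irrefl _)
  · rw [hF.eq_of_adj_root c hc w hwc hvw]
    exact hc

lemma degIn_glue_self [Finite V] (hF : T.IsPendantFamily v C S) (hc : c ∈ C) :
    T.degIn (glue v C S) c = T.degIn (S c) c + 1 := by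
  have : {w ∈ glue v C S | T.Adj c w} = insert v {w ∈ S c | T.Adj c w} := by
    ext w
    refine ⟨fun ⟨hw, hcw⟩ => ?_, fun hw => ?_⟩
    · rcases hF.eq_or_mem_of_adj hc (hF.self_mem c hc) hw hcw with ⟨-, rfl⟩ | hwc
      exacts [Set.mem_insert _ _, Set.mem_insert_of_mem _ ⟨hwc, hcw⟩]
    · rcases hw with rfl | ⟨hwc, hcw⟩
      exacts [⟨Set.mem_insert _ _, (hF.adj c hc).symm⟩,
        ⟨mem_glue.mpr (Or.inr ⟨c, hc, hwc⟩), hcw⟩]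
  rw [degIn, this, Set.ncard_insert_of_notMem fun h => hF.root_notMem c hc h.1]
  rfl

lemma degIn_glue_of_ne (hF : T.IsPendantFamily v C S) {u : V} (hc : c ∈ C) (hu : u ∈ S c)
    (huc : u ≠ c) : T.degIn (glue v C S) u = T.degIn (S c) u := by
  unfold degIn
  congr 1
  ext w
  refine ⟨fun ⟨hw, huw⟩ => ?_, fun ⟨hw, huw⟩ => ⟨mem_glue.mpr (Or.inr ⟨c, hc, hw⟩), huw⟩⟩
  rcases hF.eq_or_mem_of_adj hc hu hw huw with ⟨h, -⟩ | hwc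
  exacts [absurd h huc, ⟨hwc, huw⟩]

/-- Gluing changes degrees only at `v` and at the roots `c`, so the only edges to control are the
edges `vc` and the edges of `S c` at `c`. -/
lemma noAdjacentBranching_glue [Finite V] (hF : T.IsPendantFamily v C S)
    (hS : ∀ c ∈ C, T.NoAdjacentBranching (S c))
    (hroot : ∀ c ∈ C, C.card ≤ 2 ∨ T.degIn (S c) c ≤ 1)
    (hchild : ∀ c ∈ C, ∀ w ∈ S c, T.Adj c w → T.degIn (S c) c ≤ 1 ∨ T.degIn (S c) w ≤ 2) :
    T.NoAdjacentBranching (glue v C S) := by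
  have key : ∀ c ∈ C, ∀ x ∈ S c, ∀ y ∈ glue v C S, T.Adj x y →
      ¬(3 ≤ T.degIn (glue v C S) x ∧ 3 ≤ T.degIn (glue v C S) y) := by
    intro c hc x hx y hy hxy
    rcases hF.eq_or_mem_of_adj hc hx hy hxy with ⟨rfl, rfl⟩ | hyc
    · rw [hF.degIn_glue_self hc, hF.degIn_glue_root]
      have := hroot x hc
      omega
    by_cases hxc : x = c
    · subst hxc
      rw [hF.degIn_glue_self hc, hF.degIn_glue_of_ne hc hyc (hxy.ne.symm)]
      have := hchild x hc y hyc hxy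
      omega
    by_cases hyc' : y = c
    · subst hyc'
      rw [hF.degIn_glue_self hc, hF.degIn_glue_of_ne hc hx hxc]
      have := hchild y hc x hx hxy.symm
      omega
    rw [hF.degIn_glue_of_ne hc hx hxc, hF.degIn_glue_of_ne hc hyc hyc']
    exact hS c hc x hx y hyc hxy
  intro x hx y hy hxy
  rcases mem_glue.mp hx with rfl | ⟨c, hc, hxc⟩
  · rcases mem_glue.mp hy with rfl | ⟨c, hc, hyc⟩
    · exact absurd hxy (T.loopless.irrefl _)
    · rw [and_comm]
      exact key c hc y hyc x hx hxy.symm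
  · exact key c hc x hxc y hy hxy

lemma degIn_glue_le_two_of_adj_root [Finite V] (hF : T.IsPendantFamily v C S)
    (hdeg : ∀ c ∈ C, T.degIn (S c) c ≤ 1) {x : V} (hx : x ∈ glue v C S) (hvx : T.Adj v x) :
    T.degIn (glue v C S) x ≤ 2 := by
  rcases mem_glue.mp hx with rfl | ⟨c, hc, hxc⟩
  · exact absurd hvx (T.loopless.irrefl _)
  · obtain rfl := hF.eq_of_adj_root c hc x hxc hvx
    rw [hF.degIn_glue_self hc]
    have := hdeg x hc
    omega

lemma ncard_inter_glue [Finite V] (hF : T.IsPendantFamily v C S) (L : Set V) :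
    (L ∩ glue v C S).ncard = (L ∩ {v}).ncard + ∑ c ∈ C, (L ∩ S c).ncard := by
  have hdisj : Disjoint (L ∩ {v}) (⋃ c ∈ C, L ∩ S c) := by
    simp only [Set.disjoint_iUnion_right]
    exact fun c hc => Set.disjoint_left.mpr fun x ⟨_, hxv⟩ ⟨_, hxc⟩ =>
      hF.root_notMem c hc (Set.mem_singleton_iff.mp hxv ▸ hxc)
  rw [glue, Set.insert_eq, Set.inter_union_distrib_left, Set.inter_iUnion₂,
    Set.ncard_union_eq hdisj, ← Finset.set_biUnion_coe,
    C.finite_toSet.ncard_biUnion (fun _ _ => Set.toFinite _)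
      (hF.pairwiseDisjoint.mono fun _ => Set.inter_subset_right), finsum_mem_coe_finset]

lemma ncard_inter_glue_le_mul [Finite V] {L : Set V} {B S₁ S₂ : V → Set V}
    (hB : T.IsPendantFamily v C B) (hS₂ : T.IsPendantFamily v C S₂)
    (hS₁ : T.IsPendantFamily v C' S₁)
    (hcount : ∀ c ∈ C, (L ∩ B c).ncard ≤ (L ∩ S₁ c).ncard * (L ∩ S₂ c).ncard)
    (hmax : ∀ c ∈ C, (L ∩ S₁ c).ncard ≤ ∑ c' ∈ C', (L ∩ S₁ c').ncard) :
    (L ∩ glue v C B).ncard ≤ (L ∩ glue v C S₂).ncard * (L ∩ glue v C' S₁).ncard := by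
  have he : (L ∩ {v}).ncard ≤ 1 :=
    (Set.ncard_le_ncard Set.inter_subset_right).trans (Set.ncard_singleton v).le
  calc (L ∩ glue v C B).ncard
      = (L ∩ {v}).ncard + ∑ c ∈ C, (L ∩ B c).ncard := hB.ncard_inter_glue L
    _ ≤ (L ∩ {v}).ncard + ∑ c ∈ C, (L ∩ S₁ c).ncard * (L ∩ S₂ c).ncard := by
        gcongr with c hc
        exact hcount c hc
    _ ≤ ((L ∩ {v}).ncard + ∑ c ∈ C, (L ∩ S₂ c).ncard) *
          ((L ∩ {v}).ncard + ∑ c ∈ C', (L ∩ S₁ c).ncard) :=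
        C.add_sum_mul_le_mul _ _ he hmax
    _ = (L ∩ glue v C S₂).ncard * (L ∩ glue v C' S₁).ncard := by
        rw [hS₂.ncard_inter_glue, hS₁.ncard_inter_glue]

end IsPendantFamily

theorem IsAcyclic.exists_rootedSubtree_pair [Finite V] (hT : T.IsAcyclic) (L A : Set V)
    (hv : v ∈ A) (hA : (T.induce A).Connected) :
    ∃ S₁ S₂ : Set V,
      T.IsRootedSubtree A v S₁ ∧ T.NoAdjacentBranching S₁ ∧
        (∀ x ∈ S₁, T.Adj v x → T.degIn S₁ x ≤ 2) ∧
      T.IsRootedSubtree A v S₂ ∧ T.NoAdjacentBranching S₂ ∧ T.degIn S₂ v ≤ 1 ∧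
      (L ∩ A).ncard ≤ (L ∩ S₁).ncard * (L ∩ S₂).ncard := by
  induction A using WellFoundedLT.induction generalizing v with
  | ind A ih =>
  obtain ⟨C, hC⟩ : ∃ C : Finset V, ∀ c, c ∈ C ↔ c ∈ A ∧ T.Adj v c :=
    ⟨(Set.toFinite {c | c ∈ A ∧ T.Adj v c}).toFinset, by simp⟩
  have hB := isPendantFamily_branch (A := A) hT fun c hc => (hC c).1 hc
  have hBA : ∀ c, T.branch A v c ⊆ A := fun c => branch_subset.trans Set.sdiff_subset
  have := fun c (hc : c ∈ C) => ih (T.branch A v c)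
    (branch_subset.trans_ssubset (Set.sdiff_singleton_ssubset.mpr hv)) (hB.self_mem c hc)
    (connected_induce_branch (branch_subset (hB.self_mem c hc)))
  choose! S₁ S₂ hS₁ hnb₁ hdeg₁ hS₂ hnb₂ hdeg₂ hcount using this
  obtain ⟨C', hC'C, hC'card, hmax⟩ :=
    C.exists_subset_card_le_one_forall_le_sum fun c => (L ∩ S₁ c).ncard
  have hF₂ : T.IsPendantFamily v C S₂ :=
    hB.mono subset_rfl (fun c hc => (hS₂ c hc).subset) fun c hc => (hS₂ c hc).root_mem
  have hF₁ : T.IsPendantFamily v C' S₁ :=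
    hB.mono hC'C (fun c hc => (hS₁ c (hC'C hc)).subset) fun c hc => (hS₁ c (hC'C hc)).root_mem
  refine ⟨glue v C S₂, glue v C' S₁,
    hF₂.isRootedSubtree_glue hv (fun c hc => (hS₂ c hc).subset.trans (hBA c))
      (fun c hc => (hS₂ c hc).connected),
    hF₂.noAdjacentBranching_glue hnb₂ (fun c hc => Or.inr (hdeg₂ c hc))
      (fun c hc _ _ _ => Or.inl (hdeg₂ c hc)),
    fun x hx hvx => hF₂.degIn_glue_le_two_of_adj_root hdeg₂ hx hvx,
    hF₁.isRootedSubtree_glue hv (fun c hc => (hS₁ c (hC'C hc)).subset.trans (hBA c))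
      (fun c hc => (hS₁ c (hC'C hc)).connected),
    hF₁.noAdjacentBranching_glue (fun c hc => hnb₁ c (hC'C hc)) (fun _ _ => Or.inl (by omega))
      (fun c hc w hw hcw => Or.inr (hdeg₁ c (hC'C hc) w hw hcw)),
    hF₁.degIn_glue_root.trans_le hC'card, ?_⟩
  exact (Set.ncard_le_ncard (Set.inter_subset_inter_right L
    (subset_glue_branch hA hv fun c hcA hvc => (hC c).2 ⟨hcA, hvc⟩))).trans
    (hB.ncard_inter_glue_le_mul hF₂ hF₁ hcount hmax)

end SimpleGraph

/-- **Lemma 3.5 (Esperet, de Joannis de Verclos).** Every tree with at least `ℓ`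
leaves has a subtree containing at least `√ℓ` of the leaves and having no two
adjacent branching vertices. -/
theorem subtree_many_leaves_no_adjacent_branching (V : Type) [Fintype V]
    (T : SimpleGraph V) (hT : T.IsTree) (ℓ : ℕ)
    (hl : ℓ ≤ {v | IsLeaf T v}.ncard) :
    ∃ S : Set V, (T.induce S).Connected ∧
      Real.sqrt ℓ ≤ (({v | IsLeaf T v} ∩ S).ncard : ℝ) ∧
      ∀ u ∈ S, ∀ v ∈ S, T.Adj u v →
        ¬(3 ≤ ({w ∈ S | T.Adj u w}).ncard ∧ 3 ≤ ({w ∈ S | T.Adj v w}).ncard) := by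
  obtain ⟨v⟩ := hT.connected.nonempty
  obtain ⟨S₁, S₂, hS₁, hnb₁, -, hS₂, hnb₂, -, hcount⟩ :=
    hT.isAcyclic.exists_rootedSubtree_pair {v | IsLeaf T v} Set.univ (Set.mem_univ v)
      ((induceUnivIso T).connected_iff.mpr hT.connected)
  rw [Set.inter_univ] at hcount
  rcases sqrt_le_or_sqrt_le_of_le_mul (hl.trans hcount) with h | h
  · exact ⟨S₁, hS₁.connected, h, hnb₁⟩
  · exact ⟨S₂, hS₂.connected, h, hnb₂⟩
end
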